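/- arXiv:2106.07083 — 8 statements merged into one kernel-verified Lean document; each statement's English description precedes it below -/
import Mathlib

section
/- Let G be a connected (K₂ ∪ 3K₁)-free graph and S ⊆ V(G) a cut set such that G − S has at least three components. If G − S has a nontrivial component (a component with at least two vertices), then G − S has exactly three components. -/
/-
If `G - S` had four components, one of them nontrivial, then an edge of the nontrivial component
together with one vertex from each of three other components would induce `K₂ ∪ 3K₁`: vertices
in different components are distinct and nonadjacent. Hence at most three components remain.
-/

open SimpleGraph

/-- The disjoint union of an edge (on vertices 0,1) and `k` isolated vertices. -/
def K2uK (k : ℕ) : SimpleGraph (Fin (k + 2)) :=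
  SimpleGraph.fromRel (fun a b => a = 0 ∧ b = 1)

/-- `G` contains no induced copy of `H`. -/
def HFree {α β : Type*} (H : SimpleGraph α) (G : SimpleGraph β) : Prop :=
  IsEmpty (H ↪g G)

/-- The number of connected components of a graph. -/
noncomputable def numComp {V : Type*} (G : SimpleGraph V) : ℕ :=
  Nat.card G.ConnectedComponent

/-- `S` is a cut set of `G`: removing `S` leaves at least two components. -/
def IsCutSet {V : Type*} (G : SimpleGraph V) (S : Set V) : Prop :=
  2 ≤ numComp (G.induce (Sᶜ : Set V))

section

variable {V : Type*} {G : SimpleGraph V}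

lemma nonempty_K2uK_embedding {k : ℕ} {x y : V} (hxy : G.Adj x y) {f : Fin k → V}
    (hf : Function.Injective f) (hindep : ∀ i j, ¬ G.Adj (f i) (f j))
    (hx : ∀ i, x ≠ f i ∧ ¬ G.Adj x (f i)) (hy : ∀ i, y ≠ f i ∧ ¬ G.Adj y (f i)) :
    Nonempty (K2uK k ↪g G) := by
  set g : Fin (k + 2) → V := Fin.cons x (Fin.cons y f)
  have hg : Function.Injective g := fun i j => by
    refine Fin.cases ?_ (Fin.cases ?_ fun i => ?_) i <;>
    refine Fin.cases ?_ (Fin.cases ?_ fun j => ?_) j <;>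
    simp [g, hxy.ne, hxy.ne.symm, hx, hy, (hx _).1.symm, (hy _).1.symm, hf.eq_iff]
  refine ⟨⟨⟨g, hg⟩, fun {i j} => ?_⟩⟩
  show G.Adj (g i) (g j) ↔ _
  refine Fin.cases ?_ (Fin.cases ?_ fun i => ?_) i <;>
  refine Fin.cases ?_ (Fin.cases ?_ fun j => ?_) j <;>
  simp [g, K2uK, hxy, hxy.symm, hx, hy, hindep, Fin.succ_succ_ne_one, G.adj_comm _ x,
    G.adj_comm _ y]

lemma HFree.of_embedding {α W : Type*} {H : SimpleGraph α} {G' : SimpleGraph W}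
    (hfree : HFree H G) (e : G' ↪g G) : HFree H G' :=
  ⟨fun φ => hfree.false (e.comp φ)⟩

lemma SimpleGraph.ne_and_not_adj_of_connectedComponentMk_ne {u v : V}
    (h : G.connectedComponentMk u ≠ G.connectedComponentMk v) : u ≠ v ∧ ¬ G.Adj u v :=
  ⟨fun huv => h (huv ▸ rfl),
    fun hadj => h (ConnectedComponent.connectedComponentMk_eq_of_adj hadj)⟩

lemma SimpleGraph.ConnectedComponent.exists_adj_of_not_subsingleton {D : G.ConnectedComponent}
    (hD : ¬ D.supp.Subsingleton) : ∃ x y, G.connectedComponentMk x = D ∧ G.Adj x y := by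
  obtain ⟨x, hx, y, hy, hxy⟩ := Set.not_subsingleton_iff.mp hD
  rw [ConnectedComponent.mem_supp_iff] at hx hy
  obtain ⟨p⟩ := ConnectedComponent.exact (hx.trans hy.symm)
  exact ⟨x, _, hx, p.adj_snd (p.not_nil_of_ne hxy)⟩

lemma numComp_le_of_hFree_K2uK {k : ℕ} (hfree : HFree (K2uK k) G) {D : G.ConnectedComponent}
    (hD : ¬ D.supp.Subsingleton) : numComp G ≤ k := by
  classical
  by_contra! hk
  have : Finite G.ConnectedComponent :=
    Nat.finite_of_card_ne_zero (by unfold numComp at hk; omega)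
  have := Fintype.ofFinite G.ConnectedComponent
  rw [numComp, Nat.card_eq_fintype_card] at hk
  obtain ⟨x, y, hxD, hxy⟩ := D.exists_adj_of_not_subsingleton hD
  obtain ⟨e⟩ : Nonempty (Fin k ↪ {C : G.ConnectedComponent // C ≠ D}) := by
    refine Function.Embedding.nonempty_of_card_le ?_
    rw [Fintype.card_fin, Fintype.card_subtype_compl, Fintype.card_subtype_eq]
    omega
  have hyD : G.connectedComponentMk y = D :=
    (ConnectedComponent.connectedComponentMk_eq_of_adj hxy).symm.trans hxD
  set rep : G.ConnectedComponent → V := Quot.out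
  have hrep (C : G.ConnectedComponent) : G.connectedComponentMk (rep C) = C := Quot.out_eq C
  have hsep (z : V) (hzD : G.connectedComponentMk z = D) (i : Fin k) :
      z ≠ rep (e i) ∧ ¬ G.Adj z (rep (e i)) :=
    ne_and_not_adj_of_connectedComponentMk_ne (by rw [hzD, hrep]; exact (e i).2.symm)
  refine hfree.false (nonempty_K2uK_embedding hxy (f := fun i => rep (e i)) ?_
    (fun i j => ?_) (hsep x hxD) (hsep y hyD)).some
  · intro i j hij
    apply e.injective
    rw [Subtype.ext_iff, ← hrep (e i), ← hrep (e j)]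
    exact congrArg G.connectedComponentMk hij
  · rcases eq_or_ne i j with rfl | hij
    · exact G.irrefl
    · refine (ne_and_not_adj_of_connectedComponentMk_ne ?_).2
      rw [hrep, hrep]
      exact Subtype.coe_injective.ne (e.injective.ne hij)

end

theorem stmt_0_general {V : Type*} (G : SimpleGraph V)
    (hfree : HFree (K2uK 3) G) (S : Set V)
    (h3 : 3 ≤ numComp (G.induce (Sᶜ : Set V)))
    (hnontriv : ∃ D : (G.induce (Sᶜ : Set V)).ConnectedComponent, ¬ D.supp.Subsingleton) :
    numComp (G.induce (Sᶜ : Set V)) = 3 := by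
  obtain ⟨D, hD⟩ := hnontriv
  exact le_antisymm
    (numComp_le_of_hFree_K2uK (hfree.of_embedding (Embedding.induce _)) hD) h3

theorem stmt_0 {V : Type*} [Fintype V] (G : SimpleGraph V) (hconn : G.Connected)
    (hfree : HFree (K2uK 3) G) (S : Set V) (hcut : IsCutSet G S)
    (h3 : 3 ≤ numComp (G.induce (Sᶜ : Set V)))
    (hnontriv : ∃ D : (G.induce (Sᶜ : Set V)).ConnectedComponent, ¬ D.supp.Subsingleton) :
    numComp (G.induce (Sᶜ : Set V)) = 3 :=
  stmt_0_general G hfree S h3 hnontriv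
end

section
/- Let G be a connected (K₂ ∪ 3K₁)-free graph and S ⊆ V(G) a cut set such that G − S has at least three components. If G − S has a nontrivial component, then that nontrivial component is (K₂ ∪ K₁)-free. -/
open SimpleGraph

instance K2uK.decAdj (k : ℕ) : DecidableRel (K2uK k).Adj := fun a b =>
  decidable_of_iff _ (SimpleGraph.fromRel_adj _ a b).symm

lemma key {V W : Type*} [Finite W] (G : SimpleGraph V) (hfree : HFree (K2uK 3) G)
    (H : SimpleGraph W) (ι : H ↪g G) (h3 : 3 ≤ Nat.card H.ConnectedComponent)
    (D : H.ConnectedComponent) : HFree (K2uK 1) (H.induce D.supp) := by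
  constructor
  intro f
  haveI : Fintype H.ConnectedComponent := Fintype.ofFinite _
  have hcard : 2 < Fintype.card H.ConnectedComponent := by
    rwa [Nat.card_eq_fintype_card] at h3
  obtain ⟨a, b, c, hab, hac, hbc⟩ := Fintype.two_lt_card_iff.mp hcard
  obtain ⟨C1, C2, hC1, hC2, hC12⟩ : ∃ C1 C2 : H.ConnectedComponent,
      C1 ≠ D ∧ C2 ≠ D ∧ C1 ≠ C2 := by
    by_cases ha : a = D
    · refine ⟨b, c, ?_, ?_, hbc⟩ <;> rw [← ha]
      · exact fun h => hab h.symm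
      · exact fun h => hac h.symm
    · by_cases hb : b = D
      · exact ⟨a, c, ha, fun h => hbc (hb.trans h.symm), hac⟩
      · exact ⟨a, b, ha, hb, hab⟩
  obtain ⟨x, hx'⟩ := C1.exists_rep
  obtain ⟨y, hy'⟩ := C2.exists_rep
  have hx : H.connectedComponentMk x = C1 := hx'
  have hy : H.connectedComponentMk y = C2 := hy'
  have hmem : ∀ i : Fin 3, H.connectedComponentMk ((f i : D.supp) : W) = D := fun i =>
    (ConnectedComponent.mem_supp_iff _ _).mp (f i).2
  have hadj : ∀ i j : Fin 3, H.Adj ((f i : D.supp) : W) ((f j : D.supp) : W) ↔ (K2uK 1).Adj i j :=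
    fun i j => f.map_rel_iff
  have hcross : ∀ p q : W,
      H.connectedComponentMk p ≠ H.connectedComponentMk q → ¬ H.Adj p q :=
    fun p q h hpq => h (ConnectedComponent.sound hpq.reachable)
  have hne : ∀ p q : W,
      H.connectedComponentMk p ≠ H.connectedComponentMk q → p ≠ q :=
    fun p q h hpq => h (by rw [hpq])
  let g : Fin 5 → W := ![(f 0 : D.supp), (f 1 : D.supp), (f 2 : D.supp), x, y]
  have hfne : ∀ i j : Fin 3, i ≠ j → ((f i : D.supp) : W) ≠ ((f j : D.supp) : W) :=
    fun i j hij h => hij (f.injective (Subtype.ext h))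
  have hDx : ∀ i : Fin 3, H.connectedComponentMk ((f i : D.supp) : W) ≠ H.connectedComponentMk x := by
    intro i; rw [hmem i, hx]; exact fun h => hC1 h.symm
  have hDy : ∀ i : Fin 3, H.connectedComponentMk ((f i : D.supp) : W) ≠ H.connectedComponentMk y := by
    intro i; rw [hmem i, hy]; exact fun h => hC2 h.symm
  have hxy : H.connectedComponentMk x ≠ H.connectedComponentMk y := by
    rw [hx, hy]; exact hC12
  have hginj : Function.Injective g := by
    intro i j hij
    fin_cases i <;> fin_cases j <;> simp only [g, Matrix.cons_val_zero, Matrix.cons_val_one,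
      Matrix.head_cons, Matrix.cons_val_two, Matrix.tail_cons, Matrix.cons_val_three,
      Matrix.cons_val_four] at hij <;>
      first
      | rfl
      | exact absurd hij (hfne 0 1 (by decide)) | exact absurd hij (hfne 1 0 (by decide))
      | exact absurd hij (hfne 0 2 (by decide)) | exact absurd hij (hfne 2 0 (by decide))
      | exact absurd hij (hfne 1 2 (by decide)) | exact absurd hij (hfne 2 1 (by decide))
      | exact absurd hij (hne _ _ (hDx 0)) | exact absurd hij (hne _ _ (hDx 0)).symm
      | exact absurd hij (hne _ _ (hDx 1)) | exact absurd hij (hne _ _ (hDx 1)).symm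
      | exact absurd hij (hne _ _ (hDx 2)) | exact absurd hij (hne _ _ (hDx 2)).symm
      | exact absurd hij (hne _ _ (hDy 0)) | exact absurd hij (hne _ _ (hDy 0)).symm
      | exact absurd hij (hne _ _ (hDy 1)) | exact absurd hij (hne _ _ (hDy 1)).symm
      | exact absurd hij (hne _ _ (hDy 2)) | exact absurd hij (hne _ _ (hDy 2)).symm
      | exact absurd hij (hne _ _ hxy) | exact absurd hij (hne _ _ hxy).symm
  have hadj01 : H.Adj ((f 0 : D.supp) : W) ((f 1 : D.supp) : W) :=
    (hadj 0 1).mpr (by simp [K2uK, SimpleGraph.fromRel_adj])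
  have hnadj : ∀ i j : Fin 3, ¬ (K2uK 1).Adj i j →
      ¬ H.Adj ((f i : D.supp) : W) ((f j : D.supp) : W) :=
    fun i j h hg => h ((hadj i j).mp hg)
  have n02 : ¬ H.Adj ((f 0 : D.supp) : W) ((f 2 : D.supp) : W) := hnadj 0 2 (by decide)
  have n12 : ¬ H.Adj ((f 1 : D.supp) : W) ((f 2 : D.supp) : W) := hnadj 1 2 (by decide)
  have n20 : ¬ H.Adj ((f 2 : D.supp) : W) ((f 0 : D.supp) : W) := fun h => n02 h.symm
  have n21 : ¬ H.Adj ((f 2 : D.supp) : W) ((f 1 : D.supp) : W) := fun h => n12 h.symm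
  have n03 : ¬ H.Adj ((f 0 : D.supp) : W) x := hcross _ _ (hDx 0)
  have n13 : ¬ H.Adj ((f 1 : D.supp) : W) x := hcross _ _ (hDx 1)
  have n23 : ¬ H.Adj ((f 2 : D.supp) : W) x := hcross _ _ (hDx 2)
  have n04 : ¬ H.Adj ((f 0 : D.supp) : W) y := hcross _ _ (hDy 0)
  have n14 : ¬ H.Adj ((f 1 : D.supp) : W) y := hcross _ _ (hDy 1)
  have n24 : ¬ H.Adj ((f 2 : D.supp) : W) y := hcross _ _ (hDy 2)
  have n30 : ¬ H.Adj x ((f 0 : D.supp) : W) := fun h => n03 h.symm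
  have n31 : ¬ H.Adj x ((f 1 : D.supp) : W) := fun h => n13 h.symm
  have n32 : ¬ H.Adj x ((f 2 : D.supp) : W) := fun h => n23 h.symm
  have n40 : ¬ H.Adj y ((f 0 : D.supp) : W) := fun h => n04 h.symm
  have n41 : ¬ H.Adj y ((f 1 : D.supp) : W) := fun h => n14 h.symm
  have n42 : ¬ H.Adj y ((f 2 : D.supp) : W) := fun h => n24 h.symm
  have n34 : ¬ H.Adj x y := hcross _ _ hxy
  have n43 : ¬ H.Adj y x := fun h => n34 h.symm
  have hadj10 : H.Adj ((f 1 : D.supp) : W) ((f 0 : D.supp) : W) := hadj01.symm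
  have e : K2uK 3 ↪g H := by
    refine ⟨⟨g, hginj⟩, ?_⟩
    intro i j
    show H.Adj (g i) (g j) ↔ _
    fin_cases i <;> fin_cases j <;>
      first
      | exact ⟨fun h => absurd h (H.irrefl), fun h => absurd h (by decide)⟩
      | exact ⟨fun _ => by decide, fun _ => hadj01⟩
      | exact ⟨fun _ => by decide, fun _ => hadj10⟩
      | exact ⟨fun h => absurd h n02, fun h => absurd h (by decide)⟩
      | exact ⟨fun h => absurd h n12, fun h => absurd h (by decide)⟩
      | exact ⟨fun h => absurd h n20, fun h => absurd h (by decide)⟩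
      | exact ⟨fun h => absurd h n21, fun h => absurd h (by decide)⟩
      | exact ⟨fun h => absurd h n03, fun h => absurd h (by decide)⟩
      | exact ⟨fun h => absurd h n13, fun h => absurd h (by decide)⟩
      | exact ⟨fun h => absurd h n23, fun h => absurd h (by decide)⟩
      | exact ⟨fun h => absurd h n04, fun h => absurd h (by decide)⟩
      | exact ⟨fun h => absurd h n14, fun h => absurd h (by decide)⟩
      | exact ⟨fun h => absurd h n24, fun h => absurd h (by decide)⟩
      | exact ⟨fun h => absurd h n30, fun h => absurd h (by decide)⟩
      | exact ⟨fun h => absurd h n31, fun h => absurd h (by decide)⟩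
      | exact ⟨fun h => absurd h n32, fun h => absurd h (by decide)⟩
      | exact ⟨fun h => absurd h n40, fun h => absurd h (by decide)⟩
      | exact ⟨fun h => absurd h n41, fun h => absurd h (by decide)⟩
      | exact ⟨fun h => absurd h n42, fun h => absurd h (by decide)⟩
      | exact ⟨fun h => absurd h n34, fun h => absurd h (by decide)⟩
      | exact ⟨fun h => absurd h n43, fun h => absurd h (by decide)⟩
  exact hfree.false (ι.comp e)

theorem stmt_1 {V : Type*} [Fintype V] (G : SimpleGraph V) (hconn : G.Connected)
    (hfree : HFree (K2uK 3) G) (S : Set V) (hcut : IsCutSet G S)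
    (h3 : 3 ≤ numComp (G.induce (Sᶜ : Set V)))
    (D : (G.induce (Sᶜ : Set V)).ConnectedComponent) (hD : ¬ D.supp.Subsingleton) :
    HFree (K2uK 1) ((G.induce (Sᶜ : Set V)).induce D.supp) :=
  key G hfree _ (SimpleGraph.Embedding.induce _) h3 D
end

section
/- Let C be a longest cycle in a graph G with a fixed orientation, let H be a component of G − V(C), and let x, y be two distinct vertices of C each having a neighbor in H. Then the successors x⁺ and y⁺ of x and y along the orientation of C are not adjacent in G. -/
open SimpleGraph

/-- `f : ZMod n → V` describes an oriented cycle of length `n` in `G`. -/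
structure IsOrientedCycle {V : Type*} (G : SimpleGraph V) (n : ℕ) (f : ZMod n → V) :
    Prop where
  three_le : 3 ≤ n
  inj : Function.Injective f
  adj : ∀ i, G.Adj (f i) (f (i + 1))

/-- `f` is a longest cycle of `G`. -/
def IsLongestCycle {V : Type*} (G : SimpleGraph V) (n : ℕ) (f : ZMod n → V) : Prop :=
  IsOrientedCycle G n f ∧ ∀ (m : ℕ) (g : ZMod m → V), IsOrientedCycle G m g → m ≤ n

lemma path_getVert_inj {V : Type*} {G : SimpleGraph V} {u v : V}
    {w : G.Walk u v} (hw : w.IsPath) :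
    ∀ a b, a ≤ w.length → b ≤ w.length → w.getVert a = w.getVert b → a = b := by
  induction w with
  | nil => intro a b ha hb _; simp_all
  | @cons u x v h q ih =>
    rw [Walk.cons_isPath_iff] at hw
    intro a b ha hb hab
    match a, b with
    | 0, 0 => rfl
    | 0, b+1 =>
      exfalso
      exact hw.2 (Walk.mem_support_iff_exists_getVert.2
        ⟨b, by simpa using hab.symm, by simpa using hb⟩)
    | a+1, 0 =>
      exfalso
      exact hw.2 (Walk.mem_support_iff_exists_getVert.2
        ⟨a, by simpa using hab, by simpa using ha⟩)
    | a+1, b+1 =>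
      have := ih hw.1 a b (by simpa using ha) (by simpa using hb) (by simpa using hab)
      omega

lemma cycle_of_fun {V : Type*} {G : SimpleGraph V} {m : ℕ} (F : ℕ → V)
    (h3 : 3 ≤ m)
    (hinj : ∀ t t', t < m → t' < m → F t = F t' → t = t')
    (hadj : ∀ t, t < m → G.Adj (F t) (F ((t+1) % m))) :
    IsOrientedCycle G m (fun z => F z.val) := by
  haveI : NeZero m := ⟨by omega⟩
  haveI : Fact (1 < m) := ⟨by omega⟩
  refine ⟨h3, ?_, ?_⟩
  · intro z z' hz
    exact ZMod.val_injective m (hinj _ _ (ZMod.val_lt z) (ZMod.val_lt z') hz)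
  · intro z
    have h1 : (z + 1).val = (z.val + 1) % m := by rw [ZMod.val_add, ZMod.val_one]
    simpa [h1] using hadj z.val (ZMod.val_lt z)

theorem stmt_9 {V : Type*} (G : SimpleGraph V) (n : ℕ) (f : ZMod n → V)
    (hC : IsLongestCycle G n f)
    (H : (G.induce ((Set.range f)ᶜ : Set V)).ConnectedComponent) (i j : ZMod n)
    (hne : f i ≠ f j)
    (hx : ∃ h ∈ H.supp, G.Adj (f i) ↑h) (hy : ∃ h ∈ H.supp, G.Adj (f j) ↑h) :
    ¬ G.Adj (f (i + 1)) (f (j + 1)) := by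
  intro A
  classical
  obtain ⟨⟨h3, finj, fadj⟩, hmax⟩ := hC
  haveI : NeZero n := ⟨by omega⟩
  obtain ⟨a, haH, hxadj⟩ := hx
  obtain ⟨b, hbH, hyadj⟩ := hy
  have hreach : (G.induce ((Set.range f)ᶜ : Set V)).Reachable a b := by
    rw [ConnectedComponent.mem_supp_iff] at haH hbH
    exact ConnectedComponent.exact (haH.trans hbH.symm)
  obtain ⟨w0⟩ := hreach
  obtain ⟨w, hwp⟩ : ∃ w : (G.induce ((Set.range f)ᶜ : Set V)).Walk a b, w.IsPath :=
    ⟨w0.toPath.1, w0.toPath.2⟩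
  set L := w.length with hLdef
  set k := (j - i).val with hkdef
  have hkn : k < n := ZMod.val_lt _
  have hkc : ((k : ℕ) : ZMod n) = j - i := ZMod.natCast_rightInverse _
  have hk1 : 1 ≤ k := by
    by_contra hcon
    have hk0 : k = 0 := by omega
    rw [hk0] at hkc
    simp only [Nat.cast_zero] at hkc
    exact hne (congrArg f (by linear_combination hkc))
  set m := L + 1 + n with hmdef
  set pv : ℕ → V := fun t => ((w.getVert t : ((Set.range f)ᶜ : Set V)) : V) with hpvdef
  set e : ℕ → ZMod n := fun s =>
    if s < k then j - (s : ZMod n) else j + 1 + ((s - k : ℕ) : ZMod n) with hedef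
  set F : ℕ → V := fun t => if t ≤ L then pv t else f (e (t - (L+1))) with hFdef
  have hpv_nr : ∀ t, pv t ∉ Set.range f := fun t => (w.getVert t).2
  have hcastinj : ∀ x y : ℕ, x < n → y < n → ((x : ZMod n) = (y : ZMod n)) → x = y := by
    intro x y hxn hyn hxy
    have := congrArg ZMod.val hxy
    rwa [ZMod.val_cast_of_lt hxn, ZMod.val_cast_of_lt hyn] at this
  have hdvd : ∀ x : ℕ, ((x : ZMod n) = 0) → x ≠ 0 → n ≤ x := by
    intro x hxz hx0
    exact Nat.le_of_dvd (Nat.pos_of_ne_zero hx0)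
      ((ZMod.natCast_eq_zero_iff x n).1 hxz)
  have he_inj : ∀ s s', s < n → s' < n → e s = e s' → s = s' := by
    intro s s' hs hs' hee
    simp only [hedef] at hee
    by_cases c1 : s < k <;> by_cases c2 : s' < k
    · rw [if_pos c1, if_pos c2] at hee
      exact hcastinj s s' (by omega) (by omega) (by linear_combination -hee)
    · rw [if_pos c1, if_neg c2] at hee
      exfalso
      have h0 : ((s + 1 + (s' - k) : ℕ) : ZMod n) = 0 := by push_cast; linear_combination -hee
      have := hdvd _ h0 (by omega)
      omega
    · rw [if_neg c1, if_pos c2] at hee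
      exfalso
      have h0 : ((s' + 1 + (s - k) : ℕ) : ZMod n) = 0 := by push_cast; linear_combination hee
      have := hdvd _ h0 (by omega)
      omega
    · rw [if_neg c1, if_neg c2] at hee
      have : ((s - k : ℕ) : ZMod n) = ((s' - k : ℕ) : ZMod n) := by linear_combination hee
      have := hcastinj _ _ (by omega) (by omega) this
      omega
  have hpv_inj : ∀ t t', t ≤ L → t' ≤ L → pv t = pv t' → t = t' := by
    intro t t' ht ht' hpp
    simp only [hpvdef] at hpp
    exact path_getVert_inj hwp t t' ht ht' (Subtype.ext hpp)
  have hF_inj : ∀ t t', t < m → t' < m → F t = F t' → t = t' := by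
    intro t t' ht ht' hFF
    simp only [hFdef] at hFF
    by_cases c1 : t ≤ L <;> by_cases c2 : t' ≤ L
    · rw [if_pos c1, if_pos c2] at hFF; exact hpv_inj _ _ c1 c2 hFF
    · rw [if_pos c1, if_neg c2] at hFF; exact absurd ⟨_, hFF.symm⟩ (hpv_nr t)
    · rw [if_neg c1, if_pos c2] at hFF; exact absurd ⟨_, hFF⟩ (hpv_nr t')
    · rw [if_neg c1, if_neg c2] at hFF
      have := he_inj _ _ (by omega) (by omega) (finj hFF)
      omega
  have hgetb : pv L = (b : V) := by simp only [hpvdef, hLdef]; rw [Walk.getVert_length]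
  have hgeta : pv 0 = (a : V) := by simp only [hpvdef]; rw [Walk.getVert_zero]
  have hik : j - ((k - 1 : ℕ) : ZMod n) = i + 1 := by
    rw [Nat.cast_sub hk1, hkc, Nat.cast_one]; ring
  have hlast : j + 1 + ((n - 1 - k : ℕ) : ZMod n) = i := by
    rw [Nat.cast_sub (by omega : k ≤ n - 1), Nat.cast_sub (by omega : 1 ≤ n),
      ZMod.natCast_self, hkc, Nat.cast_one]
    ring
  have hF_adj : ∀ t, t < m → G.Adj (F t) (F ((t+1) % m)) := by
    intro t ht
    rcases lt_trichotomy t L with hc | hc | hc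
    · have hmod : (t+1) % m = t+1 := Nat.mod_eq_of_lt (by omega)
      rw [hmod]
      simp only [hFdef]
      rw [if_pos (by omega), if_pos (by omega)]
      simp only [hpvdef]
      exact w.adj_getVert_succ (by omega)
    · have hmod : (t+1) % m = t+1 := Nat.mod_eq_of_lt (by omega)
      rw [hmod]
      simp only [hFdef]
      rw [if_pos (le_of_eq hc), if_neg (by omega)]
      have h0 : t + 1 - (L + 1) = 0 := by omega
      rw [h0]
      have he0 : e 0 = j := by
        simp only [hedef]
        rw [if_pos (by omega)]
        simp
      rw [he0, hc, hgetb]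
      exact hyadj.symm
    · by_cases hml : t = m - 1
      · subst hml
        have hmod : (m - 1 + 1) % m = 0 := by
          have : m - 1 + 1 = m := by omega
          rw [this, Nat.mod_self]
        rw [hmod]
        simp only [hFdef]
        rw [if_neg (by omega), if_pos (by omega)]
        have h1 : m - 1 - (L + 1) = n - 1 := by omega
        rw [h1]
        have he1 : e (n - 1) = i := by
          simp only [hedef]
          rw [if_neg (by omega)]
          rw [← hlast]
        rw [he1, hgeta]
        exact hxadj
      · obtain ⟨s, rfl⟩ : ∃ s, t = L + 1 + s := ⟨t - (L+1), by omega⟩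
        have hsn : s < n - 1 := by omega
        have hmod : (L + 1 + s + 1) % m = L + 1 + s + 1 := Nat.mod_eq_of_lt (by omega)
        rw [hmod]
        simp only [hFdef]
        rw [if_neg (by omega), if_neg (by omega)]
        have h1 : L + 1 + s - (L + 1) = s := by omega
        have h2 : L + 1 + s + 1 - (L + 1) = s + 1 := by omega
        rw [h1, h2]
        simp only [hedef]
        rcases lt_trichotomy (s + 1) k with hck | hck | hck
        · rw [if_pos (by omega), if_pos hck]
          have := fadj (j - ((s + 1 : ℕ) : ZMod n))
          have harg : j - ((s + 1 : ℕ) : ZMod n) + 1 = j - ((s : ℕ) : ZMod n) := by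
            push_cast; ring
          rw [harg] at this
          exact this.symm
        · rw [if_pos (by omega), if_neg (by omega)]
          have hsk : s + 1 - k = 0 := by omega
          have hs1 : s = k - 1 := by omega
          rw [hsk, hs1, hik]
          simpa using A
        · rw [if_neg (by omega), if_neg (by omega)]
          have hrw : (s + 1 - k : ℕ) = (s - k) + 1 := by omega
          rw [hrw, Nat.cast_add, Nat.cast_one]
          have := fadj (j + 1 + ((s - k : ℕ) : ZMod n))
          have harg : j + 1 + ((s - k : ℕ) : ZMod n) + 1
              = j + 1 + (((s - k : ℕ) : ZMod n) + 1) := by ring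
          rw [harg] at this
          exact this
  have hcyc : IsOrientedCycle G m (fun z => F z.val) := cycle_of_fun F (by omega) hF_inj hF_adj
  have := hmax m _ hcyc
  omega
end

section
/- Let G be a (K₂ ∪ 3K₁)-free graph, C a longest cycle in G with a fixed orientation, and H a component of G − V(C) such that at least three distinct vertices of C have neighbors in H. Then H is a trivial component, i.e., H consists of a single vertex. -/
open SimpleGraph

/-!
If `H` had two vertices it would contain an edge `uw`. For attachment vertices `x ≠ y` of `H`
on `C`, neither `x⁺` nor `y⁺` is adjacent to a vertex of `H`, and `x⁺y⁺` is not an edge: otherwise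
`C` could be rerouted through `H` into a longer cycle. So the successors of three attachment
vertices, together with `uw`, induce `K₂ ∪ 3K₁`.
-/

namespace SimpleGraph

variable {V : Type*} {G : SimpleGraph V}

/-- `l ++ [a]`, with `a` the head of `l`, is the closed walk around `l`. -/
theorem exists_isOrientedCycle_of_isChain {l : List V} {a : V} (h3 : 3 ≤ l.length)
    (hnd : l.Nodup) (ha : l.head? = some a) (hch : (l ++ [a]).IsChain G.Adj) :
    ∃ g : ZMod l.length → V, IsOrientedCycle G l.length g := by
  have : NeZero l.length := ⟨by omega⟩
  have ha0 : l[0] = a := by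
    rw [List.head?_eq_getElem?, List.getElem?_eq_getElem (by omega)] at ha
    exact Option.some.inj ha
  refine ⟨fun z => l[z.val]'(ZMod.val_lt z), h3, fun z w hzw => ?_, fun z => ?_⟩
  · exact ZMod.val_injective _ ((List.Nodup.getElem_inj_iff hnd).mp hzw)
  · have hz := ZMod.val_lt z
    have hstep := List.isChain_iff_getElem.mp hch z.val (by simp; omega)
    have hsucc : (z + 1).val = (z.val + 1) % l.length := by
      have : Fact (1 < l.length) := ⟨by omega⟩
      rw [ZMod.val_add, ZMod.val_one]
    simp only [List.getElem_append_left hz] at hstep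
    rcases Nat.lt_or_ge (z.val + 1) l.length with hlt | hge
    · simpa [hsucc, Nat.mod_eq_of_lt hlt, List.getElem_append_left hlt] using hstep
    · have hlast : z.val + 1 = l.length := by omega
      simpa [hsucc, hlast, ha0] using hstep

theorem exists_list_of_reachable_induce {S : Set V} {u v : S} (h : (G.induce S).Reachable u v) :
    ∃ P : List V, P.Nodup ∧ P.IsChain G.Adj ∧ P.head? = some (u : V) ∧ P.getLast? = some (v : V) ∧
      ∀ w ∈ P, w ∈ S := by
  classical
  obtain ⟨p⟩ := h
  let q : G.Walk u v := p.toPath.1.map (Embedding.induce S).toHom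
  refine ⟨q.support, (p.toPath.2.map Subtype.val_injective).support_nodup,
    q.isChain_adj_support, ?_, ?_, ?_⟩
  · rw [← q.cons_tail_support]; rfl
  · rw [List.getLast?_eq_some_getLast q.support_ne_nil, q.getLast_support]
  · intro w hw
    rw [show q.support = _ from Walk.support_map _ _] at hw
    obtain ⟨w', -, rfl⟩ := List.mem_map.mp hw
    exact w'.2

def cycleArc {n : ℕ} (f : ZMod n → V) (a : ZMod n) (d : ℕ) : List V :=
  (List.range d).map fun t : ℕ => f (a + t)

section cycleArc

variable {n : ℕ} (f : ZMod n → V) (a : ZMod n)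

@[simp]
theorem length_cycleArc (d : ℕ) : (cycleArc f a d).length = d := by
  simp [cycleArc]

theorem cycleArc_add (d e : ℕ) :
    cycleArc f a (d + e) = cycleArc f a d ++ cycleArc f (a + d) e := by
  simp [cycleArc, List.range_add, add_assoc]

@[simp]
theorem head?_cycleArc (d : ℕ) : (cycleArc f a (d + 1)).head? = some (f a) := by
  simp [cycleArc, List.head?_range]

@[simp]
theorem getLast?_cycleArc (d : ℕ) : (cycleArc f a (d + 1)).getLast? = some (f (a + d)) := by
  simp [cycleArc, List.getLast?_range]

theorem mem_range_of_mem_cycleArc {d : ℕ} {v : V} (hv : v ∈ cycleArc f a d) :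
    v ∈ Set.range f := by
  obtain ⟨t, -, rfl⟩ := List.mem_map.mp hv
  exact ⟨_, rfl⟩

variable {f}

theorem nodup_cycleArc (hf : Function.Injective f) {d : ℕ} (hd : d ≤ n) :
    (cycleArc f a d).Nodup := by
  refine (List.nodup_range).map_on fun s hs t ht hst => ?_
  have hcast : (s : ZMod n) = t := add_left_cancel (hf hst)
  rw [ZMod.natCast_eq_natCast_iff'] at hcast
  rw [List.mem_range] at hs ht
  rwa [Nat.mod_eq_of_lt (by omega), Nat.mod_eq_of_lt (by omega)] at hcast

theorem isChain_cycleArc (hadj : ∀ i, G.Adj (f i) (f (i + 1))) (d : ℕ) :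
    (cycleArc f a d).IsChain G.Adj := by
  refine (List.isChain_map _).mpr ((List.isChain_range _ _).mpr fun m _ => ?_)
  simpa [add_assoc] using hadj (a + m)

end cycleArc

section LongestCycle

variable {n : ℕ} {f : ZMod n → V}

/-- `A ++ P ++ C` is the cycle `A ++ C` (up to reordering) lengthened by the path `P`. -/
theorem IsLongestCycle.not_isChain_detour (hC : IsLongestCycle G n f) {A P C : List V} {a : V}
    (hlen : (A ++ C).length = n) (hAC : (A ++ C).Nodup) (hP : P.Nodup) (hPne : P ≠ [])
    (hPAC : ∀ v ∈ P, v ∉ A ++ C) (ha : (A ++ P ++ C).head? = some a) :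
    ¬ (A ++ P ++ C ++ [a]).IsChain G.Adj := by
  intro hch
  have hlen' : (A ++ P ++ C).length = n + P.length := by simp at hlen ⊢; omega
  have hnd : (A ++ P ++ C).Nodup := by
    simp only [List.nodup_append, List.mem_append] at hAC hPAC ⊢
    grind
  obtain ⟨g, hg⟩ := exists_isOrientedCycle_of_isChain (by have := hC.1.three_le; omega) hnd ha hch
  have := hC.2 _ g hg
  have := List.length_pos_iff.mpr hPne
  omega

theorem notMem_cycleArc_of_notMem_range {a : ZMod n} {d : ℕ} {v : V}
    (hv : v ∉ Set.range f) : v ∉ cycleArc f a d :=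
  fun h => hv (mem_range_of_mem_cycleArc f a h)

variable {H : (G.induce (Set.range f)ᶜ).ConnectedComponent} {h h' : ((Set.range f)ᶜ : Set V)}

theorem IsLongestCycle.not_adj_succ_of_adj (hC : IsLongestCycle G n f) (hh : h ∈ H.supp)
    (hh' : h' ∈ H.supp) {x : ZMod n} (hx : G.Adj (f x) h) : ¬ G.Adj (f (x + 1)) h' := by
  -- the longer cycle `x⁺, x⁺⁺, …, x, h ⇝ h', x⁺`
  intro hx'
  obtain ⟨P, hPnd, hPch, hPh, hPl, hPS⟩ :=
    exists_list_of_reachable_induce (H.reachable_of_mem_supp hh hh')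
  obtain ⟨m, rfl⟩ : ∃ m, n = m + 1 := ⟨n - 1, by have := hC.1.three_le; omega⟩
  refine hC.not_isChain_detour (A := cycleArc f (x + 1) (m + 1)) (C := []) (a := f (x + 1))
    (by simp) (by simpa using nodup_cycleArc (x + 1) hC.1.inj le_rfl) hPnd
    (by rintro rfl; simp at hPh)
    (fun v hv => by simpa using notMem_cycleArc_of_notMem_range (hPS v hv)) (by simp) ?_
  have hlast : x + 1 + (m : ZMod (m + 1)) = x := by
    have hm : (m : ZMod (m + 1)) + 1 = 0 := by exact_mod_cast ZMod.natCast_self (m + 1)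
    linear_combination hm
  simp only [List.append_nil, List.append_assoc, List.isChain_append, isChain_cycleArc _ hC.1.adj,
    hPch, List.IsChain.singleton, hPl, Option.mem_def, Option.some.injEq, List.head?_cons,
    forall_eq', hx'.symm, and_self, getLast?_cycleArc, hlast, List.head?_append, hPh,
    Option.or_some, Option.getD_some, hx]

theorem IsLongestCycle.not_adj_succ_succ (hC : IsLongestCycle G n f) (hh : h ∈ H.supp)
    (hh' : h' ∈ H.supp) {x y : ZMod n} (hxy : x ≠ y) (hx : G.Adj (f x) h)
    (hy : G.Adj (f y) h') : ¬ G.Adj (f (x + 1)) (f (y + 1)) := by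
  -- the longer cycle `x⁺, …, y, h' ⇝ h, x, x⁻, …, y⁺, x⁺`
  intro hsucc
  obtain ⟨P, hPnd, hPch, hPh, hPl, hPS⟩ :=
    exists_list_of_reachable_induce (H.reachable_of_mem_supp hh' hh)
  have : NeZero n := ⟨by have := hC.1.three_le; omega⟩
  have hD : (y - x).val ≠ 0 := by rwa [ne_eq, ZMod.val_eq_zero, sub_eq_zero, eq_comm]
  obtain ⟨d, e, hn, hde⟩ : ∃ d e : ℕ, n = d + 1 + (e + 1) ∧ (d + 1 : ℕ) = (y - x).val :=
    ⟨(y - x).val - 1, n - (y - x).val - 1, by have := ZMod.val_lt (y - x); omega, by omega⟩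
  have hy' : x + 1 + d = y := by
    have := congrArg (Nat.cast : ℕ → ZMod n) hde
    rw [ZMod.natCast_zmod_val] at this
    push_cast at this
    linear_combination this
  have hx' : y + 1 + e = x := by
    have : ((d + 1 + (e + 1) : ℕ) : ZMod n) = 0 := hn ▸ ZMod.natCast_self n
    push_cast at this
    linear_combination this - hy'
  refine hC.not_isChain_detour (A := cycleArc f (x + 1) (d + 1))
    (C := (cycleArc f (y + 1) (e + 1)).reverse) (a := f (x + 1)) ?_ ?_ hPnd
    (by rintro rfl; simp at hPh) ?_ (by simp) ?_
  · simp [hn]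
  · have hy1 : x + 1 + ((d + 1 : ℕ) : ZMod n) = y + 1 := by push_cast; linear_combination hy'
    have hAC : cycleArc f (x + 1) (d + 1) ++ cycleArc f (y + 1) (e + 1) = cycleArc f (x + 1) n := by
      rw [← hy1, ← cycleArc_add, ← hn]
    exact ((List.reverse_perm _).append_left _).nodup_iff.mpr
      (hAC ▸ nodup_cycleArc _ hC.1.inj le_rfl)
  · intro v hv
    simp [notMem_cycleArc_of_notMem_range (hPS v hv)]
  · have hCch := (isChain_cycleArc (y + 1) hC.1.adj (e + 1)).imp fun _ _ h => h.symm
    simp only [List.append_assoc, List.isChain_append, isChain_cycleArc _ hC.1.adj, hPch,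
      List.isChain_reverse, hCch, List.IsChain.singleton, List.getLast?_reverse, head?_cycleArc,
      Option.mem_def, Option.some.injEq, List.head?_cons, forall_eq', hsucc.symm, and_self, hPl,
      List.head?_append, List.head?_reverse, getLast?_cycleArc, hx', Option.or_some,
      Option.getD_some, hx.symm, hy', hPh, hy]

end LongestCycle

theorem nonempty_K2uK_embedding {k : ℕ} {u w : V} (huw : G.Adj u w) {s : Fin k → V}
    (hs : Function.Injective s) (hsind : ∀ t t', ¬ G.Adj (s t) (s t'))
    (hsu : ∀ t, s t ≠ u ∧ ¬ G.Adj (s t) u) (hsw : ∀ t, s t ≠ w ∧ ¬ G.Adj (s t) w) :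
    Nonempty (K2uK k ↪g G) := by
  refine ⟨⟨⟨Fin.cons u (Fin.cons w s : Fin (k + 1) → V), ?_⟩, ?_⟩⟩
  · simp only [Fin.cons_injective_iff, Set.mem_range, Fin.exists_fin_succ, Fin.cons_zero,
      Fin.cons_succ, not_or, not_exists]
    exact ⟨⟨huw.ne.symm, fun t => (hsu t).1⟩, fun t => (hsw t).1, hs⟩
  · have hus : ∀ t, ¬ G.Adj u (s t) := fun t h => (hsu t).2 h.symm
    have hws : ∀ t, ¬ G.Adj w (s t) := fun t h => (hsw t).2 h.symm
    intro a b
    refine Fin.cases ?_ (fun a => Fin.cases ?_ (fun a => ?_) a) a <;>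
      refine Fin.cases ?_ (fun b => Fin.cases ?_ (fun b => ?_) b) b
    all_goals simp [K2uK, huw, huw.symm, hsind, hsu, hsw, hus, hws, Fin.succ_succ_ne_one,
      eq_comm (a := (1 : Fin (k + 2)))]

theorem ConnectedComponent.exists_adj_of_mem_supp {C : G.ConnectedComponent} {u v : V}
    (hu : u ∈ C.supp) (hv : v ∈ C.supp) (huv : u ≠ v) : ∃ w ∈ C.supp, G.Adj u w := by
  obtain ⟨p⟩ := C.reachable_of_mem_supp hu hv
  cases p with
  | nil => exact absurd rfl huv
  | cons h _ => exact ⟨_, C.mem_supp_of_adj_mem_supp hu h, h⟩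

theorem IsLongestCycle.supp_subsingleton_of_hFree {k n : ℕ} {f : ZMod n → V}
    (hfree : HFree (K2uK k) G) (hC : IsLongestCycle G n f)
    (H : (G.induce (Set.range f)ᶜ).ConnectedComponent) {c : Fin k → ZMod n}
    (hc : Function.Injective c) (hatt : ∀ t, ∃ h ∈ H.supp, G.Adj (f (c t)) h) :
    H.supp.Subsingleton := by
  intro u hu v hv
  by_contra huv
  obtain ⟨w, hw, huw⟩ := H.exists_adj_of_mem_supp hu hv huv
  choose a ha hadj using hatt
  have hoff : ∀ (x : ((Set.range f)ᶜ : Set V)) t, f (c t + 1) ≠ x := fun x t h => x.2 ⟨_, h⟩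
  refine hfree.false (nonempty_K2uK_embedding (G := G) huw (s := fun t => f (c t + 1))
    (hC.1.inj.comp ((add_left_injective 1).comp hc)) (fun t t' => ?_)
    (fun t => ⟨hoff u t, hC.not_adj_succ_of_adj (ha t) hu (hadj t)⟩)
    (fun t => ⟨hoff w t, hC.not_adj_succ_of_adj (ha t) hw (hadj t)⟩)).some
  obtain rfl | htt' := eq_or_ne t t'
  · exact G.loopless.irrefl _
  · exact hC.not_adj_succ_succ (ha t) (ha t') (hc.ne htt') (hadj t) (hadj t')

end SimpleGraph

theorem stmt_10 {V : Type*} (G : SimpleGraph V) (hfree : HFree (K2uK 3) G)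
    (n : ℕ) (f : ZMod n → V) (hC : IsLongestCycle G n f)
    (H : (G.induce ((Set.range f)ᶜ : Set V)).ConnectedComponent)
    (i j k : ZMod n) (hij : f i ≠ f j) (hik : f i ≠ f k) (hjk : f j ≠ f k)
    (hi : ∃ h ∈ H.supp, G.Adj (f i) ↑h) (hj : ∃ h ∈ H.supp, G.Adj (f j) ↑h)
    (hk : ∃ h ∈ H.supp, G.Adj (f k) ↑h) :
    H.supp.Subsingleton := by
  refine hC.supp_subsingleton_of_hFree hfree H (c := ![i, j, k]) ?_ ?_
  · intro a b hab
    fin_cases a <;> fin_cases b <;> simp_all [eq_comm]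
  · intro t
    fin_cases t <;> assumption
end

section
/- Let G be a graph on n vertices with minimum degree δ(G) ≥ (n+1)/2. Then G is hamiltonian-connected, i.e., between any two distinct vertices of G there exists a hamiltonian path. -/
/-! Let `S = V \ {v}`; every vertex has at least `|S| / 2` neighbours in `S`. Dirac's
longest-path argument then gives a Hamiltonian cycle of `G[S]`: if both ends of a path in `S`
have all their `S`-neighbours on the path, a pigeonhole count over its splitting points yields a
Pósa rotation closing it into a cycle, and a vertex `z ∈ S` off that cycle shares a neighbour
with the path's first vertex; that neighbour lies on the cycle, which opens there into a longer
path through `z`. Opening the Hamiltonian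
cycle at `u` gives a path `u … b`; since `deg v + deg b ≥ n + 1`, one more rotation makes it end
at a neighbour of `v`, and appending `v` gives the Hamiltonian `u`–`v` path. -/

open SimpleGraph

open Finset

namespace List

variable {α : Type*}

theorem exists_eq_append_cons_cons_of_length_tail_lt (p q : α → Bool) :
    ∀ l : List α, l.tail.length < l.tail.countP p + l.dropLast.countP q →
      ∃ l₁ x y l₂, l = l₁ ++ x :: y :: l₂ ∧ q x ∧ p y
  | [] | [_] => by simp
  | x :: y :: l => by
    intro h
    by_cases hxy : q x ∧ p y
    · exact ⟨[], x, y, l, rfl, hxy⟩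
    obtain ⟨l₁, x', y', l₂, hl, hx', hy'⟩ :=
      exists_eq_append_cons_cons_of_length_tail_lt p q (y :: l) <| by
        simp only [tail_cons, length_cons, countP_cons, dropLast_cons_cons] at h ⊢
        grind
    exact ⟨x :: l₁, x', y', l₂, by rw [hl, cons_append], hx', hy'⟩

variable {R : α → α → Prop}

theorem IsChain.append_cons_reverse [Std.Symm R] {l₁ l₂ : List α} {x : α}
    (h : (l₁ ++ x :: l₂).IsChain R) (hx : ∀ y ∈ l₂.getLast?, R y x) :
    (l₁ ++ x :: l₂.reverse).IsChain R := by
  rw [isChain_split] at h ⊢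
  refine ⟨h.1, IsChain.cons (isChain_reverse.2 ?_) ?_⟩
  · exact h.2.tail.imp fun _ _ h => symm h
  · simpa [head?_reverse] using fun y hy => symm (hx y hy)

theorem IsChain.append_comm {l₁ l₂ : List α} (h : (l₁ ++ l₂).IsChain R)
    (h' : ∀ x ∈ l₂.getLast?, ∀ y ∈ l₁.head?, R x y) : (l₂ ++ l₁).IsChain R :=
  h.right_of_append.append h.left_of_append h'

-- `c` lists the vertices of a cycle: `hcyc` relates its last entry to its first.
theorem exists_isChain_cons_perm_of_mem {c : List α} {w : α} (hc : c.IsChain R)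
    (hcyc : ∀ x ∈ c.getLast?, ∀ y ∈ c.head?, R x y) (hw : w ∈ c) :
    ∃ t, (w :: t).IsChain R ∧ (w :: t).Perm c := by
  obtain ⟨c₁, c₂, rfl⟩ := append_of_mem hw
  refine ⟨c₂ ++ c₁, hc.append_comm fun x hx y hy => hcyc x ?_ y ?_,
    (perm_append_comm.cons w).trans perm_middle.symm⟩
  · simp [getLast?_append, Option.mem_def.1 hx]
  · simp [head?_append, Option.mem_def.1 hy]

theorem exists_perm_isChain_of_length_tail_lt [Std.Symm R] [DecidableRel R] {l : List α}
    {a b : α} (hl : l.IsChain R) (hb : l.getLast? = some b)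
    (h : l.tail.length < l.tail.countP (R a ·) + l.dropLast.countP (R b ·)) :
    ∃ l' : List α, l'.IsChain R ∧ l'.Perm l ∧ l'.head? = l.head? ∧ ∀ y ∈ l'.getLast?, R a y := by
  obtain ⟨l₁, x, y, l₂, rfl, hx, hy⟩ := exists_eq_append_cons_cons_of_length_tail_lt _ _ l h
  refine ⟨l₁ ++ x :: (y :: l₂).reverse, hl.append_cons_reverse ?_, ?_, ?_, ?_⟩
  · intro z hz
    obtain rfl : z = b := by
      rw [getLast?_append, getLast?_cons, Option.mem_def.1 hz] at hb
      simpa using hb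
    simpa using hx
  · exact (perm_cons x |>.2 (reverse_perm _)).append_left l₁
  · cases l₁ <;> simp
  · rw [reverse_cons, ← cons_append, ← append_assoc, getLast?_concat]
    simpa using hy

theorem card_le_countP [DecidableEq α] {s : Finset α} {l : List α} {p : α → Bool}
    (h : ∀ x ∈ s, x ∈ l ∧ p x) : #s ≤ l.countP p := by
  rw [countP_eq_length_filter]
  refine (card_le_card fun x hx => ?_).trans (toFinset_card_le _)
  simpa using h x hx

end List

namespace SimpleGraph

variable {V : Type*} [DecidableEq V] (G : SimpleGraph V)

theorem exists_isHamiltonian_of_isChain {l : List V} {u v : V} (hl : l.IsChain G.Adj)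
    (hnd : l.Nodup) (hmem : ∀ x, x ∈ l) (hu : l.head? = some u) (hv : l.getLast? = some v) :
    ∃ p : G.Walk u v, p.IsHamiltonian := by
  have hne : l ≠ [] := by rintro rfl; simp at hu
  let p := (Walk.ofSupport l hne hl).copy (by simpa [List.head?_eq_some_head hne] using hu)
    (by simpa [List.getLast?_eq_some_getLast hne] using hv)
  have hp : p.support = l := by simp [p]
  exact ⟨p, (Walk.IsPath.mk' (hp ▸ hnd)).isHamiltonian_of_mem fun x => hp ▸ hmem x⟩

variable [DecidableRel G.Adj] {S : Finset V}

theorem exists_adj_adj_of_not_adj (hS : ∀ x ∈ S, #S ≤ 2 * #{y ∈ S | G.Adj x y}) {a z : V}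
    (ha : a ∈ S) (hz : z ∈ S) (haz : ¬G.Adj a z) : ∃ w ∈ S, G.Adj a w ∧ G.Adj z w := by
  have hza : {y ∈ S | G.Adj a y} ⊆ S.erase z := fun y hy => by
    simp only [mem_filter] at hy
    exact mem_erase.2 ⟨fun h => haz (h ▸ hy.2), hy.1⟩
  have hzz : {y ∈ S | G.Adj z y} ⊆ S.erase z := fun y hy => by
    simp only [mem_filter] at hy
    exact mem_erase.2 ⟨(G.ne_of_adj hy.2).symm, hy.1⟩
  have hcard : #(S.erase z) < #{y ∈ S | G.Adj a y} + #{y ∈ S | G.Adj z y} := by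
    have := hS a ha; have := hS z hz; have := card_pos.2 ⟨z, hz⟩
    rw [card_erase_of_mem hz]; omega
  obtain ⟨w, hw⟩ := inter_nonempty_of_card_lt_card_add_card hza hzz hcard
  simp only [mem_inter, mem_filter] at hw
  exact ⟨w, hw.1.1, hw.1.2, hw.2.2⟩

theorem exists_cyclic_perm_of_forall_adj_mem (hS : ∀ x ∈ S, #S ≤ 2 * #{y ∈ S | G.Adj x y})
    {a b : V} {t : List V} (hl : (a :: t).IsChain G.Adj) (hnd : (a :: t).Nodup)
    (hlS : ∀ x ∈ a :: t, x ∈ S) (hb : (a :: t).getLast? = some b)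
    (ha : ∀ y ∈ S, G.Adj a y → y ∈ a :: t) (hb' : ∀ y ∈ S, G.Adj b y → y ∈ a :: t) :
    ∃ c : List V, c.IsChain G.Adj ∧ c.Perm (a :: t) ∧
      ∀ x ∈ c.getLast?, ∀ y ∈ c.head?, G.Adj x y := by
  have hcount : t.length < t.countP (G.Adj a ·) + (a :: t).dropLast.countP (G.Adj b ·) := by
    have hlen : (a :: t).length ≤ #S := by
      rw [← List.toFinset_card_of_nodup hnd]
      exact card_le_card fun x hx => hlS x (List.mem_toFinset.1 hx)
    have hNa : #{y ∈ S | G.Adj a y} ≤ t.countP (G.Adj a ·) := List.card_le_countP fun y hy => by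
      simp only [mem_filter] at hy
      refine ⟨?_, by simpa using hy.2⟩
      simpa [(G.ne_of_adj hy.2).symm] using ha y hy.1 hy.2
    have hNb : #{y ∈ S | G.Adj b y} ≤ (a :: t).dropLast.countP (G.Adj b ·) :=
      List.card_le_countP fun y hy => by
        simp only [mem_filter] at hy
        refine ⟨List.mem_dropLast_of_mem_of_ne_getLast (hb' y hy.1 hy.2) ?_, by simpa using hy.2⟩
        rw [List.getLast?_eq_some_getLast (List.cons_ne_nil a t), Option.some_inj] at hb
        exact hb ▸ (G.ne_of_adj hy.2).symm
    have := hS a (hlS a (by simp)); have := hS b (hlS b (List.mem_of_getLast? hb))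
    simp only [List.length_cons] at hlen
    omega
  have := G.symm
  obtain ⟨c, hc, hperm, hhead, hlast⟩ := List.exists_perm_isChain_of_length_tail_lt hl hb hcount
  refine ⟨c, hc, hperm, fun x hx y hy => ?_⟩
  rw [hhead, List.head?_cons, Option.mem_some_iff] at hy
  exact hy ▸ (hlast x hx).symm

theorem exists_cyclic_of_isChain (hS : ∀ x ∈ S, #S ≤ 2 * #{y ∈ S | G.Adj x y}) (a : V)
    (t : List V) (hl : (a :: t).IsChain G.Adj) (hnd : (a :: t).Nodup) (hlS : ∀ x ∈ a :: t, x ∈ S) :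
    ∃ c : List V, c.IsChain G.Adj ∧ c.Nodup ∧ (∀ x, x ∈ c ↔ x ∈ S) ∧
      ∀ x ∈ c.getLast?, ∀ y ∈ c.head?, G.Adj x y := by
  have hlen : ∀ z ∈ S, z ∉ a :: t → t.length + 1 < #S := fun z hz hzl => by
    rw [← List.length_cons, ← List.toFinset_card_of_nodup hnd]
    exact card_lt_card ⟨fun x hx => hlS x (List.mem_toFinset.1 hx),
      fun h => hzl (List.mem_toFinset.1 (h hz))⟩
  obtain ⟨b, hb⟩ : ∃ b, (a :: t).getLast? = some b := ⟨_, List.getLast?_eq_some_getLast (by simp)⟩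
  by_cases hext : ∃ z ∈ S, z ∉ a :: t ∧ G.Adj a z
  · obtain ⟨z, hz, hzl, haz⟩ := hext
    have := hlen z hz hzl
    exact exists_cyclic_of_isChain hS z (a :: t) (hl.cons (by simpa using haz.symm))
      (hnd.cons hzl) (by simpa [hz] using hlS)
  by_cases hext' : ∃ z ∈ S, z ∉ a :: t ∧ G.Adj b z
  · obtain ⟨z, hz, hzl, hbz⟩ := hext'
    have := hlen z hz hzl
    exact exists_cyclic_of_isChain hS z (a :: t).reverse
      ((List.isChain_reverse.2 (hl.imp fun _ _ h => h.symm)).cons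
        (by rw [List.head?_reverse, hb]; simpa using hbz.symm))
      ((List.nodup_reverse.2 hnd).cons fun h => hzl (List.mem_reverse.1 h))
      (fun x hx => by simp only [List.mem_cons, List.mem_reverse] at hx; grind)
  push Not at hext hext'
  obtain ⟨c, hc, hperm, hcyc⟩ := G.exists_cyclic_perm_of_forall_adj_mem hS hl hnd hlS hb
    (fun y hy hay => not_not.1 fun h => hext y hy h hay)
    (fun y hy hby => not_not.1 fun h => hext' y hy h hby)
  by_cases hcov : ∀ x ∈ S, x ∈ a :: t
  · exact ⟨c, hc, hperm.nodup_iff.2 hnd,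
      fun x => ⟨fun hx => hlS x (hperm.subset hx), fun hx => hperm.symm.subset (hcov x hx)⟩, hcyc⟩
  push Not at hcov
  obtain ⟨z, hz, hzl⟩ := hcov
  -- `a` is not adjacent to `z`, so they have a common neighbour `w`, which lies on the cycle;
  -- opening the cycle at `w` and prepending `z` gives a longer path.
  obtain ⟨w, hwS, haw, hzw⟩ := G.exists_adj_adj_of_not_adj hS (hlS a (by simp)) hz
    (fun h => hext z hz hzl h)
  have hwc : w ∈ c := hperm.symm.subset (not_not.1 fun h => hext w hwS h haw)
  obtain ⟨t', ht', hperm'⟩ := List.exists_isChain_cons_perm_of_mem hc hcyc hwc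
  have hperm'' := hperm'.trans hperm
  have := hlen z hz hzl
  have : t'.length = t.length := by simpa using hperm''.length_eq
  exact exists_cyclic_of_isChain hS z (w :: t') (ht'.cons (by simpa using hzw))
    ((hperm''.nodup_iff.2 hnd).cons fun h => hzl (hperm''.subset h))
    (by simpa [hz] using fun x hx => hlS x (hperm''.subset hx))
termination_by #S - t.length

theorem exists_isHamiltonian_of_isChain_cons [Fintype V] {u v : V} {t : List V}
    (hdeg : ∀ x, Fintype.card V + 1 ≤ 2 * G.degree x) (hl : (u :: t).IsChain G.Adj)
    (hnd : (u :: t).Nodup) (hmem : ∀ x, x ∈ u :: t ↔ x ≠ v) :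
    ∃ p : G.Walk u v, p.IsHamiltonian := by
  obtain ⟨b, hb⟩ : ∃ b, (u :: t).getLast? = some b := ⟨_, List.getLast?_eq_some_getLast (by simp)⟩
  have hlen : t.length + 2 = Fintype.card V := by
    have h : (u :: t).toFinset = univ.erase v := by ext x; rw [List.mem_toFinset, hmem]; simp
    have hcard := card_erase_of_mem (mem_univ v)
    rw [← h, List.toFinset_card_of_nodup hnd, card_univ, List.length_cons] at hcard
    have := Fintype.card_pos_iff.2 ⟨v⟩
    omega
  have hNv : #((G.neighborFinset v).erase u) ≤ t.countP (G.Adj v ·) :=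
    List.card_le_countP fun y hy => by
      obtain ⟨hyu, hvy⟩ := mem_erase.1 hy
      rw [mem_neighborFinset] at hvy
      have := (hmem y).2 (G.ne_of_adj hvy).symm
      exact ⟨by simpa [hyu] using this, by simpa using hvy⟩
  have hNb : #((G.neighborFinset b).erase v) ≤ (u :: t).dropLast.countP (G.Adj b ·) :=
    List.card_le_countP fun y hy => by
      obtain ⟨hyv, hby⟩ := mem_erase.1 hy
      rw [mem_neighborFinset] at hby
      refine ⟨List.mem_dropLast_of_mem_of_ne_getLast ((hmem y).2 hyv) ?_, by simpa using hby⟩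
      rw [List.getLast?_eq_some_getLast (List.cons_ne_nil u t), Option.some_inj] at hb
      exact hb ▸ (G.ne_of_adj hby).symm
  have hcount : t.length < t.countP (G.Adj v ·) + (u :: t).dropLast.countP (G.Adj b ·) := by
    have hv := pred_card_le_card_erase.trans hNv
    have hb := pred_card_le_card_erase.trans hNb
    rw [card_neighborFinset_eq_degree] at hv hb
    have := hdeg v; have := hdeg b
    omega
  have := G.symm
  obtain ⟨l, hl', hperm, hhead, hlast⟩ := List.exists_perm_isChain_of_length_tail_lt hl hb hcount
  refine G.exists_isHamiltonian_of_isChain (l := l ++ [v])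
    (hl'.append (.singleton v) fun y hy z hz => ?_) ?_ ?_ ?_ (by simp)
  · simp only [List.head?_cons, Option.mem_some_iff] at hz
    exact hz ▸ (hlast y hy).symm
  · exact List.nodup_append.2 ⟨hperm.nodup_iff.2 hnd, List.nodup_singleton v,
      fun x hx y hy => by simpa [List.mem_singleton.1 hy] using (hmem x).1 (hperm.subset hx)⟩
  · intro x
    by_cases hx : x = v
    · simp [hx]
    · exact List.mem_append_left _ (hperm.symm.subset ((hmem x).2 hx))
  · simp [List.head?_append, hhead]

end SimpleGraph

theorem stmt_12 {V : Type*} [Fintype V] [DecidableEq V] (G : SimpleGraph V)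
    [DecidableRel G.Adj]
    (hdeg : ((Fintype.card V : ℝ) + 1) / 2 ≤ (G.minDegree : ℝ)) :
    ∀ u v : V, u ≠ v → ∃ p : G.Walk u v, p.IsHamiltonian := by
  intro u v huv
  have hdeg' : ∀ x, Fintype.card V + 1 ≤ 2 * G.degree x := fun x => by
    have : ((Fintype.card V + 1 : ℕ) : ℝ) ≤ (2 * G.minDegree : ℕ) := by push_cast; linarith
    exact (Nat.cast_le.1 this).trans (by have := G.minDegree_le_degree x; omega)
  have hS : ∀ x ∈ univ.erase v, #(univ.erase v) ≤ 2 * #{y ∈ univ.erase v | G.Adj x y} := by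
    intro x _
    have hN : (G.neighborFinset x).erase v ⊆ {y ∈ univ.erase v | G.Adj x y} := fun y hy => by
      simpa [and_comm] using hy
    have := (pred_card_le_card_erase.trans (card_le_card hN))
    rw [card_neighborFinset_eq_degree] at this
    have := hdeg' x
    rw [card_erase_of_mem (mem_univ v), card_univ]
    omega
  obtain ⟨c, hc, hnd, hcS, hcyc⟩ :=
    G.exists_cyclic_of_isChain hS u [] (.singleton u) (List.nodup_singleton u) (by simpa using huv)
  obtain ⟨t, ht, hperm⟩ :=
    List.exists_isChain_cons_perm_of_mem hc hcyc ((hcS u).2 (by simpa using huv))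
  exact G.exists_isHamiltonian_of_isChain_cons hdeg' ht (hperm.nodup_iff.2 hnd)
    fun x => by rw [hperm.mem_iff, hcS]; simp
end

section
/- Let G be a graph, C a longest cycle of G with a fixed orientation, H a component of G − V(C), and w, z two distinct vertices of C each having a neighbor in H. Let w₁ be a neighbor of w⁺ on C. If w, z, w₁ appear in this order along the orientation of C, then z⁺ is not adjacent to w₁⁺. -/
open SimpleGraph

/-!
Suppose `z⁺w₁⁺` is an edge. Then the path
`z, z⁻, …, w⁺, w₁, w₁⁻, …, z⁺, w₁⁺, w₁⁺⁺, …, w`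
runs through every vertex of `C`, and both of its ends `z` and `w` have a neighbour in `H`.
Closing it up through a path inside `H` gives a cycle longer than `C`.
-/

theorem ZMod.natCast_injOn_Ioc (n : ℕ) : Set.InjOn (Nat.cast : ℕ → ZMod n) (Set.Ioc 0 n) := by
  intro x ⟨hx0, hxn⟩ y ⟨hy0, hyn⟩ h
  rw [ZMod.natCast_eq_natCast_iff] at h
  have h' : x - 1 ≡ y - 1 [MOD n] :=
    Nat.ModEq.add_right_cancel' 1 (by rwa [Nat.sub_add_cancel hx0, Nat.sub_add_cancel hy0])
  have := h'.eq_of_lt_of_lt (by omega) (by omega)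
  omega

section

variable {V : Type*} {G : SimpleGraph V}

theorem IsOrientedCycle.exists_of_isChain {L : List V} (hne : L ≠ []) (h3 : 3 ≤ L.length)
    (hnd : L.Nodup) (hch : L.IsChain G.Adj) (hclose : G.Adj (L.getLast hne) (L.head hne)) :
    ∃ g : ZMod L.length → V, IsOrientedCycle G L.length g := by
  have : NeZero L.length := ⟨by omega⟩
  have : Fact (1 < L.length) := ⟨by omega⟩
  refine ⟨fun x => L[x.val]'(ZMod.val_lt x), h3, fun x y hxy => ?_, fun x => ?_⟩
  · exact ZMod.val_injective _ (Fin.val_eq_of_eq (List.nodup_iff_injective_get.mp hnd hxy))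
  · have hsucc : (x + 1).val = (x.val + 1) % L.length := by rw [ZMod.val_add, ZMod.val_one]
    by_cases hlt : x.val + 1 < L.length
    · simpa [hsucc, Nat.mod_eq_of_lt hlt] using List.isChain_iff_getElem.mp hch x.val hlt
    · have hlast : x.val = L.length - 1 := by have := ZMod.val_lt x; omega
      simpa [hsucc, hlast, Nat.sub_add_cancel (by omega : 1 ≤ L.length), List.getLast_eq_getElem,
        List.getElem_zero] using hclose

theorem IsLongestCycle.length_lt_of_ends_adj_component {n : ℕ} {f : ZMod n → V}
    (hC : IsLongestCycle G n f) (H : (G.induce (Set.range f)ᶜ).ConnectedComponent)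
    {L : List V} (hne : L ≠ []) (hLf : ∀ x ∈ L, x ∈ Set.range f) (hnd : L.Nodup)
    (hch : L.IsChain G.Adj) (hhead : ∃ h ∈ H.supp, G.Adj (L.head hne) h)
    (hlast : ∃ h ∈ H.supp, G.Adj (L.getLast hne) h) : L.length < n := by
  classical
  by_contra! hnL
  obtain ⟨h₂, hh₂, hadj₂⟩ := hhead
  obtain ⟨h₁, hh₁, hadj₁⟩ := hlast
  obtain ⟨P, hP⟩ := (ConnectedComponent.exact (hh₁.trans hh₂.symm)).some.toPath
  set Q := P.map (Embedding.induce (Set.range f)ᶜ).toHom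
  have hQ : Q.IsPath := hP.map (Embedding.induce (G := G) _).injective
  have hQL : (Q.support ++ L).IsChain G.Adj := by
    refine List.isChain_append.mpr ⟨Q.isChain_adj_support, hch, fun x hx y hy => ?_⟩
    rw [List.getLast?_eq_some_getLast Q.support_ne_nil, Option.mem_some_iff,
      Walk.getLast_support] at hx
    rw [List.head?_eq_some_head hne, Option.mem_some_iff] at hy
    exact hx ▸ hy ▸ hadj₂.symm
  have hnodup : (Q.support ++ L).Nodup := by
    refine List.nodup_append.mpr ⟨hQ.support_nodup, hnd, ?_⟩
    rintro _ hx y hy rfl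
    rw [Walk.support_map, List.mem_map] at hx
    obtain ⟨v, -, rfl⟩ := hx
    exact v.2 (hLf _ hy)
  have hne' : Q.support ++ L ≠ [] := by simp [hne]
  have hclose : G.Adj ((Q.support ++ L).getLast hne') ((Q.support ++ L).head hne') := by
    rwa [List.getLast_append_of_ne_nil _ hne, List.head_append_left Q.support_ne_nil,
      Walk.head_support]
  have hlen : L.length < (Q.support ++ L).length := by
    simpa using List.length_pos_iff.mpr Q.support_ne_nil
  have := hC.1.three_le
  obtain ⟨g, hg⟩ := IsOrientedCycle.exists_of_isChain hne' (by omega) hnodup hQL hclose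
  exact absurd (hC.2 _ g hg) (by omega)

/-- The offsets from `i` of the successive vertices of the rerouted path:
`a, a - 1, …, 1, b, b - 1, …, a + 1, b + 1, …, n`. -/
def crossingOrder (a b t : ℕ) : ℕ :=
  if t < a then a - t else if t < b then a + b - t else t + 1

section crossingOrder

variable {a b : ℕ}

theorem crossingOrder_zero (ha : 0 < a) : crossingOrder a b 0 = a := by
  simp [crossingOrder, ha]

theorem crossingOrder_of_le {t : ℕ} (hab : a ≤ b) (hbt : b ≤ t) :
    crossingOrder a b t = t + 1 := by
  unfold crossingOrder; split_ifs <;> omega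

theorem crossingOrder_mem_Ioc {n t : ℕ} (hab : a ≤ b) (hbn : b ≤ n) (ht : t < n) :
    crossingOrder a b t ∈ Set.Ioc 0 n := by
  unfold crossingOrder; split_ifs <;> constructor <;> omega

theorem crossingOrder_injective : Function.Injective (crossingOrder a b) := by
  intro s t h; unfold crossingOrder at h; split_ifs at h <;> omega

theorem crossingOrder_succ (hab : a < b) (t : ℕ) :
    crossingOrder a b t = crossingOrder a b (t + 1) + 1 ∨
      crossingOrder a b (t + 1) = crossingOrder a b t + 1 ∨
      (crossingOrder a b t = 1 ∧ crossingOrder a b (t + 1) = b) ∨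
      (crossingOrder a b t = a + 1 ∧ crossingOrder a b (t + 1) = b + 1) := by
  unfold crossingOrder; split_ifs <;> omega

end crossingOrder

def crossingPath {n : ℕ} (f : ZMod n → V) (i : ZMod n) (a b : ℕ) : List V :=
  (List.range n).map fun t => f (i + crossingOrder a b t)

section crossingPath

variable {n : ℕ} {f : ZMod n → V} {a b : ℕ}

theorem length_crossingPath (i : ZMod n) : (crossingPath f i a b).length = n := by
  simp [crossingPath]

theorem crossingPath_ne_nil (i : ZMod n) (hn : n ≠ 0) : crossingPath f i a b ≠ [] := by
  simp [crossingPath, hn]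

theorem head_crossingPath (i : ZMod n) (hn : n ≠ 0) (ha : 0 < a) :
    (crossingPath f i a b).head (crossingPath_ne_nil i hn) = f (i + a) := by
  simp [crossingPath, List.head_map, crossingOrder_zero ha]

theorem getLast_crossingPath (i : ZMod n) (hab : a ≤ b) (hbn : b < n) :
    (crossingPath f i a b).getLast (crossingPath_ne_nil i (by omega)) = f i := by
  simp [crossingPath, List.getLast_map, crossingOrder_of_le hab (by omega : b ≤ n - 1),
    Nat.sub_add_cancel (by omega : 1 ≤ n)]

theorem mem_range_of_mem_crossingPath (i : ZMod n) {x : V} (hx : x ∈ crossingPath f i a b) :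
    x ∈ Set.range f := by
  obtain ⟨t, -, rfl⟩ := List.mem_map.mp hx
  exact ⟨_, rfl⟩

theorem IsOrientedCycle.nodup_crossingPath (hf : IsOrientedCycle G n f) (i : ZMod n)
    (hab : a ≤ b) (hbn : b ≤ n) : (crossingPath f i a b).Nodup := by
  refine List.Nodup.map_on (fun s hs t ht hst => crossingOrder_injective (a := a) (b := b) ?_)
    List.nodup_range
  rw [List.mem_range] at hs ht
  exact ZMod.natCast_injOn_Ioc n (crossingOrder_mem_Ioc hab hbn hs)
    (crossingOrder_mem_Ioc hab hbn ht) (add_left_cancel (hf.inj hst))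

theorem IsOrientedCycle.isChain_crossingPath (hf : IsOrientedCycle G n f) (i : ZMod n)
    (hab : a < b) (h₁ : G.Adj (f (i + 1)) (f (i + b)))
    (h₂ : G.Adj (f (i + a + 1)) (f (i + b + 1))) : (crossingPath f i a b).IsChain G.Adj := by
  rw [crossingPath, List.isChain_map, List.isChain_range]
  intro t _
  rcases crossingOrder_succ hab t with h | h | ⟨h, h'⟩ | ⟨h, h'⟩
  · rw [h, Nat.cast_succ, ← add_assoc]; exact (hf.adj _).symm
  · rw [Nat.succ_eq_add_one, h, Nat.cast_succ, ← add_assoc]; exact hf.adj _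
  · rw [Nat.succ_eq_add_one, h, h', Nat.cast_one]; exact h₁
  · rw [Nat.succ_eq_add_one, h, h', Nat.cast_succ, Nat.cast_succ, ← add_assoc, ← add_assoc]
    exact h₂

end crossingPath

end

theorem stmt_16_general {V : Type*} (G : SimpleGraph V) (n : ℕ) (f : ZMod n → V)
    (hC : IsLongestCycle G n f)
    (H : (G.induce ((Set.range f)ᶜ : Set V)).ConnectedComponent) (i j k : ZMod n)
    (hw : ∃ h ∈ H.supp, G.Adj (f i) ↑h) (hz : ∃ h ∈ H.supp, G.Adj (f j) ↑h)
    (hw1 : G.Adj (f (i + 1)) (f k))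
    (horder : ∃ a b : ℕ, 0 < a ∧ a < b ∧ b < n ∧
      j = i + (a : ZMod n) ∧ k = i + (b : ZMod n)) :
    ¬ G.Adj (f (j + 1)) (f (k + 1)) := by
  obtain ⟨a, b, ha, hab, hbn, rfl, rfl⟩ := horder
  intro hadj
  have hn : n ≠ 0 := by omega
  have hlt := hC.length_lt_of_ends_adj_component H (crossingPath_ne_nil i hn)
    (fun _ => mem_range_of_mem_crossingPath i) (hC.1.nodup_crossingPath i hab.le hbn.le)
    (hC.1.isChain_crossingPath i hab hw1 hadj) (by rwa [head_crossingPath i hn ha])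
    (by rwa [getLast_crossingPath i hab.le hbn])
  rw [length_crossingPath] at hlt
  exact lt_irrefl n hlt

theorem stmt_16 {V : Type*} (G : SimpleGraph V) (n : ℕ) (f : ZMod n → V)
    (hC : IsLongestCycle G n f)
    (H : (G.induce ((Set.range f)ᶜ : Set V)).ConnectedComponent) (i j k : ZMod n)
    (hne : f i ≠ f j)
    (hw : ∃ h ∈ H.supp, G.Adj (f i) ↑h) (hz : ∃ h ∈ H.supp, G.Adj (f j) ↑h)
    (hw1 : G.Adj (f (i + 1)) (f k))
    (horder : ∃ a b : ℕ, 0 < a ∧ a < b ∧ b < n ∧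
      j = i + (a : ZMod n) ∧ k = i + (b : ZMod n)) :
    ¬ G.Adj (f (j + 1)) (f (k + 1)) :=
  stmt_16_general G n f hC H i j k hw hz hw1 horder
end

section
/- Let G be a graph, C a longest cycle of G with a fixed orientation, H a component of G − V(C), and w, z two distinct vertices of C each having a neighbor in H. Let w₁ be a neighbor of w⁺ on C. If w, w₁, z appear in this order along the orientation of C, then z⁺ is not adjacent to w₁⁻. -/
open SimpleGraph

/-! If `z⁺` were adjacent to `w₁⁻`, the crossing chords `w⁺w₁` and `z⁺w₁⁻` would let one run
through all of `C` from `z` to `w`: backwards from `z` to `w₁`, across to `w⁺`, forwards to `w₁⁻`,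
across to `z⁺` and forwards to `w`. Closing this path with a `w`–`z` path through `H` gives a cycle
longer than `C`. -/

section
variable {V : Type*} {G : SimpleGraph V}

lemma exists_isOrientedCycle_of_list {l : List V} (h3 : 3 ≤ l.length) (hl : l.Nodup)
    (hchain : l.IsChain G.Adj) (hwrap : ∀ x ∈ l.getLast?, ∀ y ∈ l.head?, G.Adj x y) :
    ∃ g : ZMod l.length → V, IsOrientedCycle G l.length g := by
  have : NeZero l.length := ⟨by omega⟩
  refine ⟨fun x => l[x.val]'(ZMod.val_lt x), h3,
    fun x y hxy => ZMod.val_injective _ (hl.getElem_inj_iff.mp hxy), fun x => ?_⟩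
  by_cases hx : x.val + 1 < l.length
  · have hv : (x + 1).val = x.val + 1 := by
      rw [ZMod.val_add_of_lt] <;> rw [ZMod.val_one'' (by omega)]
      exact hx
    simpa [hv] using List.isChain_iff_getElem.mp hchain x.val hx
  · have hxv : x.val + 1 = l.length := by have := ZMod.val_lt x; omega
    have hx1 : x + 1 = 0 := by
      rw [← ZMod.natCast_zmod_val x, ← Nat.cast_add_one, hxv, ZMod.natCast_self]
    simp only [hx1, ZMod.val_zero]
    apply hwrap
    · simp [List.getLast?_eq_getElem?, ← hxv]
    · simp [List.head?_eq_getElem?, List.getElem?_eq_getElem (show 0 < l.length by omega)]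

lemma IsLongestCycle.length_le_of_list {n : ℕ} {f : ZMod n → V} (hC : IsLongestCycle G n f)
    {l : List V} (h3 : 3 ≤ l.length) (hl : l.Nodup) (hchain : l.IsChain G.Adj)
    (hwrap : ∀ x ∈ l.getLast?, ∀ y ∈ l.head?, G.Adj x y) : l.length ≤ n :=
  let ⟨g, hg⟩ := exists_isOrientedCycle_of_list h3 hl hchain hwrap
  hC.2 _ g hg

lemma SimpleGraph.Reachable.exists_isPath_of_induce {s : Set V} {u v : s}
    (h : (G.induce s).Reachable u v) : ∃ p : G.Walk u v, p.IsPath ∧ ∀ x ∈ p.support, x ∈ s := by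
  classical
  obtain ⟨q⟩ := h
  refine ⟨q.toPath.1.map (Embedding.induce s).toHom, q.toPath.2.map Subtype.val_injective, ?_⟩
  intro x hx
  obtain ⟨y, -, rfl⟩ := List.mem_map.mp ((Walk.support_map _ _) ▸ hx)
  exact y.2

namespace IsOrientedCycle

variable {n : ℕ} {f : ZMod n → V} (i : ZMod n)

lemma isChain_map_range' (hf : IsOrientedCycle G n f) (s m : ℕ) :
    ((List.range' s m).map fun t : ℕ => f (i + t)).IsChain G.Adj := by
  refine List.isChain_map _ |>.mpr <| (List.isChain_range' s m 1).imp fun x y hxy => ?_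
  simpa [hxy, add_assoc] using hf.adj (i + x)

lemma nodup_map_range' (hf : IsOrientedCycle G n f) (s : ℕ) :
    ((List.range' s n).map fun t : ℕ => f (i + t)).Nodup := by
  refine (List.nodup_range' ..).map_on fun x hx y hy hxy => ?_
  rw [List.mem_range'_1] at hx hy
  obtain ⟨u, rfl⟩ := Nat.exists_eq_add_of_le hx.1
  obtain ⟨v, rfl⟩ := Nat.exists_eq_add_of_le hy.1
  have h := add_left_cancel (hf.inj hxy)
  push_cast at h
  have := congrArg ZMod.val (add_left_cancel h)
  rw [ZMod.val_natCast_of_lt (by omega), ZMod.val_natCast_of_lt (by omega)] at this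
  omega

lemma exists_perm_isChain_of_crossing_chords (hf : IsOrientedCycle G n f) {a b : ℕ}
    (ha : 1 ≤ a) (hab : a < b) (hbn : b < n)
    (h1a : G.Adj (f (i + 1)) (f (i + a + 1))) (hab' : G.Adj (f (i + a)) (f (i + b + 1))) :
    ∃ l : List V, l.Perm ((List.range' 1 n).map fun t : ℕ => f (i + t)) ∧ l.IsChain G.Adj ∧
      l.head? = some (f (i + b)) ∧ l.getLast? = some (f i) := by
  have hA : (List.range' (a + 1) (b - a)).head? = some (a + 1) ∧
      (List.range' (a + 1) (b - a)).getLast? = some b := by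
    rw [List.head?_range', List.getLast?_range', if_neg (by omega), if_neg (by omega)]
    exact ⟨rfl, by congr 1; omega⟩
  have hB : (List.range' 1 a).head? = some 1 ∧ (List.range' 1 a).getLast? = some a := by
    rw [List.head?_range', List.getLast?_range', if_neg (by omega), if_neg (by omega)]
    exact ⟨rfl, by congr 1; omega⟩
  have hC : (List.range' (b + 1) (n - b)).head? = some (b + 1) ∧
      (List.range' (b + 1) (n - b)).getLast? = some n := by
    rw [List.head?_range', List.getLast?_range', if_neg (by omega), if_neg (by omega)]
    exact ⟨rfl, by congr 1; omega⟩
  set c : ℕ → V := fun t => f (i + t)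
  refine ⟨((List.range' (a + 1) (b - a)).map c).reverse ++ (List.range' 1 a).map c ++
    (List.range' (b + 1) (n - b)).map c, ?_, ?_, ?_, ?_⟩
  · have hBA : List.range' 1 a ++ List.range' (a + 1) (b - a) = List.range' 1 b := by
      rw [add_comm a 1, List.range'_append_1, Nat.add_sub_cancel' hab.le]
    have hBAC : List.range' 1 b ++ List.range' (b + 1) (n - b) = List.range' 1 n := by
      rw [add_comm b 1, List.range'_append_1, Nat.add_sub_cancel' hbn.le]
    rw [← hBAC, ← hBA, List.map_append, List.map_append]
    exact (((List.reverse_perm _).append_right _).trans List.perm_append_comm).append_right _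
  · have hrev := List.isChain_reverse.mpr ((hf.isChain_map_range' i (a + 1) (b - a)).imp
      fun _ _ h => h.symm)
    refine (hrev.append (hf.isChain_map_range' i 1 a) ?_).append
      (hf.isChain_map_range' i (b + 1) (n - b)) ?_
    · simpa [hA, hB, c, ← add_assoc] using h1a.symm
    · simpa [hB, hC, c, ← add_assoc] using hab'
  · simp [hA, c]
  · simp [hB, hC, c]

end IsOrientedCycle
end

theorem stmt_17_general {V : Type*} (G : SimpleGraph V) (n : ℕ) (f : ZMod n → V)
    (hC : IsLongestCycle G n f)
    (H : (G.induce ((Set.range f)ᶜ : Set V)).ConnectedComponent) (i j k : ZMod n)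
    (hw : ∃ h ∈ H.supp, G.Adj (f i) ↑h) (hz : ∃ h ∈ H.supp, G.Adj (f j) ↑h)
    (hw1 : G.Adj (f (i + 1)) (f k))
    (horder : ∃ a b : ℕ, 0 < a ∧ a < b ∧ b < n ∧
      k = i + (a : ZMod n) ∧ j = i + (b : ZMod n)) :
    ¬ G.Adj (f (j + 1)) (f (k - 1)) := by
  intro hchord
  obtain ⟨a, b, hpos, hab, hbn, rfl, rfl⟩ := horder
  obtain ⟨a, rfl⟩ := Nat.exists_eq_add_one.mpr hpos
  have ha : 1 ≤ a := Nat.pos_of_ne_zero (by rintro rfl; simp at hw1)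
  obtain ⟨l, hl_perm, hl_chain, hl_head, hl_last⟩ :=
    hC.1.exists_perm_isChain_of_crossing_chords i ha (by omega) hbn
      (by simpa [← add_assoc] using hw1)
      (by simpa [add_sub_cancel_right, ← add_assoc] using hchord.symm)
  obtain ⟨u, huH, hiu⟩ := hw
  obtain ⟨v, hvH, hjv⟩ := hz
  obtain ⟨p, hp, hpS⟩ := Reachable.exists_isPath_of_induce (H.reachable_of_mem_supp huH hvH)
  have hp_head : p.support.head? = some (u : V) := by rw [← p.cons_tail_support]; rfl
  have hp_last : p.support.getLast? = some (v : V) := by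
    rw [List.getLast?_eq_some_getLast p.support_ne_nil, p.getLast_support]
  have hl_range : ∀ x ∈ l, x ∈ Set.range f := fun x hx => by
    obtain ⟨t, -, rfl⟩ := List.mem_map.mp (hl_perm.mem_iff.mp hx)
    exact ⟨_, rfl⟩
  have hlen := hC.length_le_of_list (l := p.support ++ l) (by simp [hl_perm.length_eq]; omega)
    (hp.support_nodup.append (hl_perm.nodup_iff.mpr (hC.1.nodup_map_range' i 1))
      (List.disjoint_left.mpr fun x hxp hxl => hpS x hxp (hl_range x hxl)))
    (p.isChain_adj_support.append hl_chain (by simpa [hp_last, hl_head] using hjv.symm))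
    (by simpa [hp_head, hl_last] using hiu)
  simp [hl_perm.length_eq] at hlen

theorem stmt_17 {V : Type*} (G : SimpleGraph V) (n : ℕ) (f : ZMod n → V)
    (hC : IsLongestCycle G n f)
    (H : (G.induce ((Set.range f)ᶜ : Set V)).ConnectedComponent) (i j k : ZMod n)
    (hne : f i ≠ f j)
    (hw : ∃ h ∈ H.supp, G.Adj (f i) ↑h) (hz : ∃ h ∈ H.supp, G.Adj (f j) ↑h)
    (hw1 : G.Adj (f (i + 1)) (f k))
    (horder : ∃ a b : ℕ, 0 < a ∧ a < b ∧ b < n ∧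
      k = i + (a : ZMod n) ∧ j = i + (b : ZMod n)) :
    ¬ G.Adj (f (j + 1)) (f (k - 1)) :=
  stmt_17_general G n f hC H i j k hw hz hw1 horder
end

section
/- Let G be a 3-tough (K₂ ∪ 3K₁)-free graph with a longest cycle C. If C is not a hamiltonian cycle, then G − V(C) has at most 3 components. -/
open SimpleGraph

/-- `G` is `t`-tough: for every cut set `S`, `t * c(G-S) ≤ |S|`. -/
noncomputable def Tough {V : Type*} [Fintype V] (t : ℝ) (G : SimpleGraph V) : Prop :=
  ∀ S : Set V, IsCutSet G S →
    t * (numComp (G.induce (Sᶜ : Set V)) : ℝ) ≤ (Nat.card S : ℝ)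

/-!
Suppose `G - V(C)` has at least four components. It is then edgeless: an edge `ab` outside `C`
and one vertex from each of three further components would induce `K₂ ∪ 3K₁`. Let `W` be the
`k ≥ 4` vertices off `C`, and list `C` cyclically as `g : ZMod n → V`.

Since `C` is longest, for `x ∈ W` the successors on `C` of the neighbours of `x` form, together
with `x`, an independent set, so 3-toughness gives `4 (d x + 1) ≤ n + k`. By
`(K₂ ∪ 3K₁)`-freeness every edge `g i g (i + 1)` of `C` has at least `k - 2` neighbours in `W`
counted at its two ends, so double counting gives `n (k - 2) ≤ 2 ∑ d x`. With `4 k ≤ n + k` this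
forces `k = 4` and equality throughout; then no two consecutive vertices of `C` have neighbours
in `W`, so `W` together with the successors of the neighbours of a vertex of maximal degree is an
independent set too large for 3-toughness.
-/

namespace SimpleGraph

open Finset

variable {V : Type*} {G : SimpleGraph V}

theorem numComp_induce_of_isIndepSet {S : Set V} (hS : G.IsIndepSet S) :
    numComp (G.induce S) = Nat.card S := by
  refine (Nat.card_eq_of_bijective _ ⟨fun x y hxy => ?_, fun C => C.exists_rep⟩).symm
  obtain ⟨w⟩ := ConnectedComponent.eq.mp hxy
  cases w with
  | nil => rfl
  | cons ha _ => exact absurd ha (hS x.2 (Subtype.prop _) (G.ne_of_adj ha))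

theorem Tough.add_one_mul_card_le [Fintype V] {t : ℝ} (ht : Tough t G) {T : Finset V}
    (hT : G.IsIndepSet T) (h2 : 2 ≤ #T) : (t + 1) * #T ≤ Fintype.card V := by
  classical
  have hcomp : numComp (G.induce ((T : Set V)ᶜᶜ)) = #T := by
    rw [compl_compl, numComp_induce_of_isIndepSet hT, Nat.card_coe_set_eq, Set.ncard_coe_finset]
  have hcut := ht _ (by rw [IsCutSet, hcomp]; exact h2)
  rw [hcomp, ← Finset.coe_compl, Nat.card_coe_set_eq, Set.ncard_coe_finset, card_compl,
    Nat.cast_sub (card_le_univ T)] at hcut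
  linarith

theorem Tough.four_mul_card_le [Fintype V] (ht : Tough 3 G) {T : Finset V}
    (hT : G.IsIndepSet T) (hV : 4 ≤ Fintype.card V) : 4 * #T ≤ Fintype.card V := by
  rcases lt_or_ge #T 2 with h | h
  · omega
  · have := ht.add_one_mul_card_le hT h
    norm_num at this
    exact_mod_cast this

theorem card_le_two_of_isIndepSet (hfree : HFree (K2uK 3) G) {u v : V} (huv : G.Adj u v)
    {T : Finset V} (hT : G.IsIndepSet T) (hTuv : ∀ x ∈ T, ¬G.Adj x u ∧ ¬G.Adj x v) :
    #T ≤ 2 := by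
  by_contra! h
  obtain ⟨p, q, r, hp, hq, hr, hpq, hpr, hqr⟩ := two_lt_card_iff.mp h
  have hne (x : V) (hx : x ∈ T) : x ≠ u ∧ x ≠ v :=
    ⟨fun h => (hTuv x hx).2 (h ▸ huv), fun h => (hTuv x hx).1 (h ▸ huv.symm)⟩
  have hTuv' (x : V) (hx : x ∈ T) : ¬G.Adj u x ∧ ¬G.Adj v x := by
    simpa [G.adj_comm] using hTuv x hx
  have hTT (x y : V) (hx : x ∈ T) (hy : y ∈ T) (hxy : x ≠ y) : ¬G.Adj x y := hT hx hy hxy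
  set f : Fin 5 → V := ![u, v, p, q, r]
  have hf (x y : Fin 5) : G.Adj (f x) (f y) ↔ (K2uK 3).Adj x y := by
    fin_cases x <;> fin_cases y <;>
      simp [f, K2uK, huv, huv.symm, hTuv, hTuv', hTT, hp, hq, hr, hpq, hpr, hqr, hpq.symm,
        hpr.symm, hqr.symm]
  have hinj : Function.Injective f := by
    intro x y hxy
    fin_cases x <;> fin_cases y <;> simp_all [f, huv.ne, eq_comm]
  exact hfree.false ⟨⟨f, hinj⟩, hf _ _⟩

theorem isIndepSet_of_four_le_numComp (hfree : HFree (K2uK 3) G) {S : Set V}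
    (h4 : 4 ≤ numComp (G.induce S)) : G.IsIndepSet S := by
  classical
  intro a ha b hb _ hab
  set H := G.induce S
  have : Finite H.ConnectedComponent :=
    Nat.finite_of_card_ne_zero (by unfold numComp at h4; omega)
  have := Fintype.ofFinite H.ConnectedComponent
  have hcomp {y z : S} (h : G.Adj y z) : H.connectedComponentMk y = H.connectedComponentMk z :=
    ConnectedComponent.connectedComponentMk_eq_of_adj h
  have hout (C : H.ConnectedComponent) : H.connectedComponentMk C.out = C := Quot.out_eq C
  set Ca := H.connectedComponentMk ⟨a, ha⟩
  set T : Finset V := (univ.erase Ca).image fun C => (C.out : V)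
  have hT : G.IsIndepSet T := by
    intro x hx y hy hxy hadj
    obtain ⟨C, -, rfl⟩ := mem_coe.mp hx |> mem_image.mp
    obtain ⟨D, -, rfl⟩ := mem_coe.mp hy |> mem_image.mp
    rw [← hout C, ← hout D, hcomp hadj] at hxy
    exact hxy rfl
  have hTab : ∀ x ∈ T, ¬G.Adj x a ∧ ¬G.Adj x b := by
    intro x hx
    obtain ⟨C, hC, rfl⟩ := mem_image.mp hx
    have hCa : H.connectedComponentMk C.out ≠ Ca := by simpa [hout] using hC
    exact ⟨fun h => hCa (hcomp h),
      fun h => hCa ((hcomp (z := ⟨b, hb⟩) h).trans (hcomp (y := ⟨a, ha⟩) hab).symm)⟩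
  have hcard : #T = numComp H - 1 := by
    rw [card_image_of_injective _ fun C D h => by rw [← hout C, ← hout D, Subtype.ext h],
      card_erase_of_mem (mem_univ _), card_univ, numComp, Nat.card_eq_fintype_card]
  have := card_le_two_of_isIndepSet hfree hab hT hTab
  omega

section Counting

variable [DecidableRel G.Adj]

theorem card_le_card_filter_adj_add_two (hfree : HFree (K2uK 3) G) {W : Finset V}
    (hW : G.IsIndepSet W) {u : V} (hu : ∃ x ∈ W, G.Adj x u) :
    #W ≤ #{x ∈ W | G.Adj x u} + 2 := by
  obtain ⟨x₀, hx₀, hx₀u⟩ := hu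
  have := card_le_two_of_isIndepSet hfree hx₀u (T := {x ∈ W | ¬G.Adj x u})
    (hW.mono (coe_subset.mpr (filter_subset _ _)))
    fun x hx => ⟨fun h => hW (mem_filter.mp hx).1 hx₀ (G.ne_of_adj h) h, (mem_filter.mp hx).2⟩
  rw [← card_filter_add_card_filter_not (s := W) (fun x => G.Adj x u)]
  omega

theorem card_le_card_filter_adj_add_card_filter_adj_add_two (hfree : HFree (K2uK 3) G)
    {W : Finset V} (hW : G.IsIndepSet W) {u v : V} (huv : G.Adj u v) :
    #W ≤ #{x ∈ W | G.Adj x u} + #{x ∈ W | G.Adj x v} + 2 := by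
  by_cases hu : ∃ x ∈ W, G.Adj x u
  · have := card_le_card_filter_adj_add_two hfree hW hu
    omega
  by_cases hv : ∃ x ∈ W, G.Adj x v
  · have := card_le_card_filter_adj_add_two hfree hW hv
    omega
  push Not at hu hv
  have := card_le_two_of_isIndepSet hfree huv hW fun x hx => ⟨hu x hx, hv x hx⟩
  omega

end Counting

theorem Walk.IsPath.isCycle_cons_concat {a b x : V} {p : G.Walk a b} (hp : p.IsPath)
    (hab : a ≠ b) (hx : x ∉ p.support) (hxa : G.Adj x a) (hbx : G.Adj b x) :
    (Walk.cons hxa (p.concat hbx)).IsCycle := by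
  rw [Walk.isCycle_iff_isPath_tail_and_le_length]
  refine ⟨by simpa using hp.concat hx hbx, ?_⟩
  have : p.length ≠ 0 := fun h => hab (Walk.eq_of_length_eq_zero h)
  simp only [Walk.length_cons, Walk.length_concat]
  omega

section CycleEnum

variable {n : ℕ} {g : ZMod n → V}

structure IsCycleEnum (G : SimpleGraph V) (g : ZMod n → V) : Prop where
  injective : Function.Injective g
  adj : ∀ i, G.Adj (g i) (g (i + 1))

theorem Walk.IsCycle.exists_isCycleEnum {v : V} {c : G.Walk v v} (hc : c.IsCycle) :
    ∃ g : ZMod c.length → V, G.IsCycleEnum g ∧ Set.range g = {x | x ∈ c.support} := by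
  have : NeZero c.length := ⟨by have := hc.three_le_length; omega⟩
  have hval (i : ZMod c.length) : i.val < c.length := ZMod.val_lt i
  refine ⟨fun i => c.getVert i.val, ⟨fun i j h => ?_, fun i => ?_⟩, ?_⟩
  · exact ZMod.val_injective _ <| hc.getVert_injOn' (by simp; have := hval i; omega)
      (by simp; have := hval j; omega) h
  · have hsucc : c.getVert (i + 1).val = c.getVert (i.val + 1) := by
      rw [ZMod.val_add, ZMod.val_one'' (by have := hc.three_le_length; omega)]
      rcases Nat.lt_or_eq_of_le (hval i) with h | h
      · rw [Nat.mod_eq_of_lt h]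
      · rw [show i.val + 1 = c.length from h, Nat.mod_self, Walk.getVert_zero,
          Walk.getVert_length]
    simpa [hsucc] using c.adj_getVert_succ (hval i)
  · ext x
    simp only [Set.mem_range, Set.mem_ofPred_eq, Walk.mem_support_iff_exists_getVert]
    constructor
    · rintro ⟨i, rfl⟩
      exact ⟨i.val, rfl, (hval i).le⟩
    · rintro ⟨k, rfl, hk⟩
      rcases hk.lt_or_eq with hk | rfl
      · exact ⟨k, by rw [ZMod.val_cast_of_lt hk]⟩
      · exact ⟨0, by simp⟩

theorem exists_walk_support_eq_map_range (hadj : ∀ i, G.Adj (g i) (g (i + 1))) (a : ZMod n)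
    (k : ℕ) : ∃ p : G.Walk (g a) (g (a + k)),
      p.support = (List.range (k + 1)).map fun t : ℕ => g (a + t) := by
  induction k generalizing a with
  | zero => exact ⟨Walk.nil.copy rfl (by simp), by simp⟩
  | succ k ih =>
    obtain ⟨p, hp⟩ := ih (a + 1)
    refine ⟨(Walk.cons (hadj a) p).copy rfl (by push_cast; ring_nf), ?_⟩
    rw [Walk.support_copy, Walk.support_cons, hp, List.range_succ_eq_map (n := k + 1)]
    simp only [List.map_cons, List.map_map, Function.comp_def, Nat.cast_zero, add_zero,
      Nat.succ_eq_add_one, Nat.cast_add_one]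
    congr 2
    ext t
    ring_nf

theorem nodup_map_range_add (hg : Function.Injective g) (a : ZMod n) :
    ((List.range n).map fun t : ℕ => g (a + t)).Nodup := by
  refine List.nodup_range.map_on fun s hs t ht hst => ?_
  have hst : (s : ZMod n) = t := add_left_cancel (hg hst)
  rw [List.mem_range] at hs ht
  rw [← ZMod.val_cast_of_lt hs, ← ZMod.val_cast_of_lt ht, hst]

variable [NeZero n]

theorem sum_card_filter_adj_add_card_filter_adj_add_one [DecidableRel G.Adj] (W : Finset V) :
    ∑ i, (#{x ∈ W | G.Adj x (g i)} + #{x ∈ W | G.Adj x (g (i + 1))}) =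
      2 * ∑ x ∈ W, #{i | G.Adj x (g i)} := by
  rw [sum_add_distrib, Fintype.sum_equiv (Equiv.addRight 1)
    (fun i => #{x ∈ W | G.Adj x (g (i + 1))}) (fun i => #{x ∈ W | G.Adj x (g i)}) fun _ => rfl,
    ← two_mul]
  congr 1
  exact (sum_card_bipartiteAbove_eq_sum_card_bipartiteBelow (fun x i => G.Adj x (g i))).symm

theorem mul_card_le_two_mul_sum_card_add [DecidableRel G.Adj]
    (hfree : HFree (K2uK 3) G) (hadj : ∀ i, G.Adj (g i) (g (i + 1))) {W : Finset V}
    (hW : G.IsIndepSet W) : n * #W ≤ 2 * ∑ x ∈ W, #{i | G.Adj x (g i)} + 2 * n := by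
  have := sum_le_sum fun i (_ : i ∈ univ) =>
    card_le_card_filter_adj_add_card_filter_adj_add_two hfree hW (hadj i)
  rw [sum_add_distrib, sum_card_filter_adj_add_card_filter_adj_add_one] at this
  simpa [ZMod.card, mul_comm] using this

theorem not_adj_add_one_of_two_mul_sum_card_le [DecidableRel G.Adj] (hfree : HFree (K2uK 3) G)
    (hadj : ∀ i, G.Adj (g i) (g (i + 1))) {W : Finset V} (hW : G.IsIndepSet W)
    (hS : 2 * ∑ x ∈ W, #{i | G.Adj x (g i)} ≤ n * (#W - 2)) {i : ZMod n}
    (hi : ∃ x ∈ W, G.Adj x (g i)) {y : V} (hy : y ∈ W) : ¬G.Adj y (g (i + 1)) := by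
  intro hyi
  have hle (j : ZMod n) (_ : j ∈ univ) :
      #W - 2 ≤ #{x ∈ W | G.Adj x (g j)} + #{x ∈ W | G.Adj x (g (j + 1))} := by
    have := card_le_card_filter_adj_add_card_filter_adj_add_two hfree hW (hadj j)
    omega
  have hsum : ∑ _j : ZMod n, (#W - 2) =
      ∑ j, (#{x ∈ W | G.Adj x (g j)} + #{x ∈ W | G.Adj x (g (j + 1))}) := by
    refine le_antisymm (sum_le_sum hle) ?_
    rw [sum_card_filter_adj_add_card_filter_adj_add_one, sum_const, card_univ, ZMod.card,
      smul_eq_mul]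
    exact hS
  have htight := (sum_eq_sum_iff_of_le hle).mp hsum i (mem_univ _)
  have h1 := card_le_card_filter_adj_add_two hfree hW hi
  have h2 : 0 < #{x ∈ W | G.Adj x (g (i + 1))} := card_pos.mpr ⟨y, mem_filter.mpr ⟨hy, hyi⟩⟩
  omega

namespace IsCycleEnum

variable (hC : G.IsCycleEnum g)
include hC

/-- The path is `g i, g (i - 1), …, g (j + 1), g (i + 1), g (i + 2), …, g j`. -/
theorem exists_isPath_of_adj_add_one {i j : ZMod n} (hij : i ≠ j)
    (h : G.Adj (g (i + 1)) (g (j + 1))) :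
    ∃ p : G.Walk (g i) (g j), p.IsPath ∧ p.length + 1 = n ∧ ∀ y ∈ p.support, y ∈ Set.range g := by
  set d := (i - j).val
  have hd : (d : ZMod n) = i - j := ZMod.natCast_zmod_val _
  have hdn : d < n := ZMod.val_lt _
  have hd0 : d ≠ 0 := fun h0 => hij (sub_eq_zero.mp ((ZMod.val_eq_zero _).mp h0))
  obtain ⟨p, hp⟩ := exists_walk_support_eq_map_range hC.adj (j + 1) (d - 1)
  obtain ⟨q, hq⟩ := exists_walk_support_eq_map_range hC.adj (i + 1) (n - d - 1)
  have hpi : j + 1 + ((d - 1 : ℕ) : ZMod n) = i := by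
    rw [Nat.cast_sub (by omega), hd]; ring
  have hqj : i + 1 + ((n - d - 1 : ℕ) : ZMod n) = j := by
    rw [Nat.cast_sub (by omega), Nat.cast_sub hdn.le, ZMod.natCast_self, hd]; ring
  set r := (p.copy rfl (congrArg g hpi)).reverse.append
    (Walk.cons h.symm (q.copy rfl (congrArg g hqj)))
  have hr : r.support.Perm ((List.range n).map fun t : ℕ => g (j + 1 + t)) := by
    have hsplit := @List.range_add d (n - d)
    rw [Nat.add_sub_cancel' hdn.le] at hsplit
    rw [hsplit, List.map_append, List.map_map]
    simp only [r, Walk.support_append, Walk.support_reverse, Walk.support_copy, Walk.support_cons,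
      List.tail_cons, hp, hq, Nat.sub_add_cancel (Nat.one_le_iff_ne_zero.mpr hd0),
      show n - d - 1 + 1 = n - d by omega]
    refine (List.reverse_perm _).append (List.Perm.of_eq (List.map_congr_left fun t _ => ?_))
    simp only [Function.comp_apply, Nat.cast_add, hd]
    ring_nf
  refine ⟨r, ?_, ?_, fun y hy => ?_⟩
  · rw [Walk.isPath_def, hr.nodup_iff]
    exact nodup_map_range_add hC.injective _
  · rw [← Walk.length_support, hr.length_eq, List.length_map, List.length_range]
  · obtain ⟨t, -, rfl⟩ := List.mem_map.mp (hr.mem_iff.mp hy)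
    exact ⟨_, rfl⟩

variable (hlong : ∀ (u : V) (d : G.Walk u u), d.IsCycle → d.length ≤ n)
include hlong

theorem not_adj_add_one_of_adj_of_adj {x : V} (hx : x ∉ Set.range g) {i j : ZMod n}
    (hij : i ≠ j) (hxi : G.Adj x (g i)) (hxj : G.Adj x (g j)) :
    ¬G.Adj (g (i + 1)) (g (j + 1)) := by
  intro h
  obtain ⟨p, hp, hlen, hsupp⟩ := hC.exists_isPath_of_adj_add_one hij h
  have := hlong _ _ <| hp.isCycle_cons_concat (hC.injective.ne hij)
    (fun hmem => hx (hsupp x hmem)) hxi hxj.symm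
  simp only [Walk.length_cons, Walk.length_concat] at this
  omega

theorem not_adj_add_one_of_adj {x : V} (hx : x ∉ Set.range g) {i : ZMod n}
    (hxi : G.Adj x (g i)) : ¬G.Adj x (g (i + 1)) := by
  intro hxi'
  have hi : i + 1 ≠ i := fun h => by simpa [h] using hC.adj i
  exact hC.not_adj_add_one_of_adj_of_adj hlong hx hi hxi' hxi (hC.adj (i + 1)).symm

variable [DecidableEq V] [DecidableRel G.Adj]

theorem isIndepSet_insert_image_add_one {x : V} (hx : x ∉ Set.range g) :
    G.IsIndepSet (insert x (({i | G.Adj x (g i)} : Finset _).image fun i => g (i + 1)) :) := by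
  rw [coe_insert]
  refine Set.Pairwise.insert (fun y hy z hz hyz => ?_) fun y hy _ => ?_
  · obtain ⟨i, hi, rfl⟩ := by simpa using hy
    obtain ⟨j, hj, rfl⟩ := by simpa using hz
    exact hC.not_adj_add_one_of_adj_of_adj hlong hx (fun h => hyz (h ▸ rfl)) hi hj
  · obtain ⟨i, hi, rfl⟩ := by simpa using hy
    have := hC.not_adj_add_one_of_adj hlong hx hi
    exact ⟨this, fun h => this h.symm⟩

variable [Fintype V] (htough : Tough 3 G)
include htough

theorem four_mul_card_add_one_le (hV : 4 ≤ Fintype.card V) {x : V} (hx : x ∉ Set.range g) :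
    4 * (#{i | G.Adj x (g i)} + 1) ≤ Fintype.card V := by
  have hxN : x ∉ ({i | G.Adj x (g i)} : Finset _).image fun i => g (i + 1) := by
    simp only [mem_image, not_exists, not_and]
    exact fun i _ h => hx ⟨_, h⟩
  rw [← card_image_of_injective (f := fun i => g (i + 1)) _
      (hC.injective.comp (add_left_injective 1)),
    ← card_insert_of_notMem hxN]
  exact htough.four_mul_card_le (hC.isIndepSet_insert_image_add_one hlong hx) hV

theorem four_mul_card_add_card_le (hV : 4 ≤ Fintype.card V) {W : Finset V} (hW : G.IsIndepSet W)
    (hWg : ∀ y ∈ W, y ∉ Set.range g) {x : V} (hxW : x ∈ W)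
    (hsep : ∀ i, G.Adj x (g i) → ∀ y ∈ W, ¬G.Adj y (g (i + 1))) :
    4 * (#W + #{i | G.Adj x (g i)}) ≤ Fintype.card V := by
  set N := ({i | G.Adj x (g i)} : Finset _).image fun i => g (i + 1)
  have hT : G.IsIndepSet (W ∪ N : Finset V) := by
    rw [coe_union]
    refine Set.pairwise_union.mpr ⟨hW, (hC.isIndepSet_insert_image_add_one hlong
      (hWg x hxW)).mono (by simp [N]), fun y hy z hz _ => ?_⟩
    obtain ⟨i, hi, rfl⟩ := by simpa [N] using hz
    have := hsep i hi y hy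
    exact ⟨this, fun h => this h.symm⟩
  have hdisj : Disjoint W N := by
    refine Finset.disjoint_left.mpr fun y hy hyN => ?_
    obtain ⟨i, -, rfl⟩ := mem_image.mp hyN
    exact hWg _ hy ⟨_, rfl⟩
  rw [← card_image_of_injective (f := fun i => g (i + 1)) _
      (hC.injective.comp (add_left_injective 1)),
    ← card_union_of_disjoint hdisj]
  exact htough.four_mul_card_le hT hV

theorem card_compl_range_le_three (hfree : HFree (K2uK 3) G)
    (hW : G.IsIndepSet (Set.range g)ᶜ) : #(Set.range g)ᶜ.toFinset ≤ 3 := by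
  set W := (Set.range g)ᶜ.toFinset
  have hWg : ∀ y ∈ W, y ∉ Set.range g := by simp [W]
  replace hW : G.IsIndepSet W := by simpa [W] using hW
  by_contra! hk
  have hcard : Fintype.card V = n + #W := by
    rw [← card_add_card_compl (Set.range g).toFinset, ← Set.toFinset_compl, Set.toFinset_range,
      card_image_of_injective _ hC.injective, card_univ, ZMod.card]
  have hV : 4 ≤ Fintype.card V := by omega
  set S := ∑ x ∈ W, #{i | G.Adj x (g i)}
  have hdeg : 4 * S + #W * 4 ≤ #W * Fintype.card V := by
    have := sum_le_sum fun x hx => hC.four_mul_card_add_one_le hlong htough hV (hWg x hx)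
    simpa only [mul_add, mul_one, sum_add_distrib, ← mul_sum, sum_const, smul_eq_mul] using this
  have hpair : n * #W ≤ 2 * S + 2 * n := mul_card_le_two_mul_sum_card_add hfree hC.adj hW
  have hWn := htough.four_mul_card_le hW hV
  rw [hcard] at hdeg hWn
  -- `hdeg` and `hpair` give `(n - #W) * (#W - 4) ≤ 0`, and `n ≥ 3 * #W` by `hWn`
  have hk4 : #W = 4 := by nlinarith
  rw [hk4] at hdeg hpair
  have hS : S = n := by omega
  obtain ⟨x, hxW, hx⟩ : ∃ x ∈ W, n ≤ 4 * #{i | G.Adj x (g i)} :=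
    exists_le_of_sum_le (card_pos.mp (by omega))
      (by rw [sum_const, smul_eq_mul, ← mul_sum, hk4]; change _ ≤ 4 * S; omega)
  have := hC.four_mul_card_add_card_le hlong htough hV hW hWg hxW fun i hi y hy =>
    not_adj_add_one_of_two_mul_sum_card_le hfree hC.adj hW
      (by change 2 * S ≤ _; rw [hk4]; omega) ⟨x, hxW, hi⟩ hy
  omega

end IsCycleEnum

end CycleEnum

end SimpleGraph

theorem stmt_18_general {V : Type*} [Fintype V] (G : SimpleGraph V)
    (htough : Tough 3 G) (hfree : HFree (K2uK 3) G)
    (v : V) (c : G.Walk v v) (hc : c.IsCycle)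
    (hlongest : ∀ (u : V) (d : G.Walk u u), d.IsCycle → d.length ≤ c.length) :
    numComp (G.induce ({x | x ∈ c.support}ᶜ : Set V)) ≤ 3 := by
  classical
  obtain ⟨g, hC, hrange⟩ := hc.exists_isCycleEnum
  have : NeZero c.length := ⟨by have := hc.three_le_length; omega⟩
  by_contra! h4
  have hind := isIndepSet_of_four_le_numComp hfree h4
  rw [← hrange] at hind h4
  rw [numComp_induce_of_isIndepSet hind, Nat.card_eq_card_toFinset] at h4
  have := hC.card_compl_range_le_three hlongest htough hfree hind
  omega

theorem stmt_18 {V : Type*} [Fintype V] (G : SimpleGraph V)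
    (htough : Tough 3 G) (hfree : HFree (K2uK 3) G)
    (v : V) (c : G.Walk v v) (hc : c.IsCycle)
    (hlongest : ∀ (u : V) (d : G.Walk u u), d.IsCycle → d.length ≤ c.length)
    (hnotham : ∃ w, w ∉ c.support) :
    numComp (G.induce ({x | x ∈ c.support}ᶜ : Set V)) ≤ 3 :=
  stmt_18_general G htough hfree v c hc hlongest
end
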